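/- arXiv:2003.07338 — 11 statements merged into one kernel-verified Lean document; each statement's English description precedes it below -/
import Mathlib

section
/- Crossing Lemma (Lemma B.3): Let p ∈ (0, p*). Suppose V₊ and V₋ are real-valued functions that are differentiable at p, V₊ satisfies the R-drifting ODE at p, V₋ satisfies the L-drifting ODE at p, and V₊(p) = V₋(p). Then V₊′(p) − V₋′(p) = (p*/(p(p*−p)))·(V₋(p) − V_S(p)); in particular, V₊′(p) − V₋′(p) is positive, zero, or negative according as V₋(p) − V_S(p) is positive, zero, or negative. -/
/-- The value of the stationary strategy: `V_S(p) = (p/p*)·v − 2c(p*−p)/(λ p* (1−p))`. -/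
noncomputable def VS (lam c v pstar p : ℝ) : ℝ :=
  p / pstar * v - 2 * c * (pstar - p) / (lam * pstar * (1 - p))

/-- Crossing Lemma (Lemma B.3). -/
theorem crossing_lemma
    (lam c v pstar : ℝ) (hlam : 0 < lam) (hc : 0 < c) (hv : 0 < v)
    (hpstar : pstar ∈ Set.Ioo (0 : ℝ) 1)
    (Vplus Vminus : ℝ → ℝ) (p : ℝ) (hp : p ∈ Set.Ioo (0 : ℝ) pstar)
    (hdVp : DifferentiableAt ℝ Vplus p)
    (hdVm : DifferentiableAt ℝ Vminus p)
    (hR : c = -lam * (1 - p) * Vplus p + lam * p * (1 - p) * deriv Vplus p)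
    (hL : c = lam * p * (1 - p) * ((v - Vminus p) / (pstar - p) - deriv Vminus p))
    (heq : Vplus p = Vminus p) :
    deriv Vplus p - deriv Vminus p
      = pstar / (p * (pstar - p)) * (Vminus p - VS lam c v pstar p)
    ∧ (0 < deriv Vplus p - deriv Vminus p ↔ 0 < Vminus p - VS lam c v pstar p)
    ∧ (deriv Vplus p - deriv Vminus p = 0 ↔ Vminus p - VS lam c v pstar p = 0)
    ∧ (deriv Vplus p - deriv Vminus p < 0 ↔ Vminus p - VS lam c v pstar p < 0) := by
  obtain ⟨hp0, hpps⟩ := hp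
  obtain ⟨hps0, hps1⟩ := hpstar
  have hp1 : p < 1 := hpps.trans hps1
  have h1p : (0:ℝ) < 1 - p := by linarith
  have hd : (0:ℝ) < pstar - p := by linarith
  have hK : 0 < pstar / (p * (pstar - p)) := by positivity
  have key : deriv Vplus p - deriv Vminus p
      = pstar / (p * (pstar - p)) * (Vminus p - VS lam c v pstar p) := by
    unfold VS
    rw [heq] at hR
    field_simp at hL ⊢
    linear_combination (-(pstar - p)) * hR + (-1) * hL
  refine ⟨key, ?_, ?_, ?_⟩
  · rw [key]; constructor
    · intro h; by_contra h'; push_neg at h'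
      nlinarith
    · intro h; positivity
  · rw [key]
    constructor
    · intro h
      rcases mul_eq_zero.mp h with h | h
      · exact absurd h (ne_of_gt hK)
      · exact h
    · intro h; rw [h, mul_zero]
  · rw [key]; constructor
    · intro h; by_contra h'; push_neg at h'
      nlinarith
    · intro h; exact mul_neg_of_pos_of_neg hK h
end

section
/- (Lemma B.1, part a) Suppose p* < 8/9. If a real-valued function V₊ is differentiable at a point p ∈ (0, p*], satisfies the R-drifting ODE at p, and V₊(p) = V_S(p), then V₊′(p) < V_S′(p). -/
/-- Lemma B.1, part (a): if `p* < 8/9`, any solution of the R-drifting ODE that meets `V_S`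
crosses it from above. -/
theorem lemma_B1_a
    (lam c v pstar : ℝ) (hlam : 0 < lam) (hc : 0 < c) (hv : 0 < v)
    (hpstar : pstar ∈ Set.Ioo (0 : ℝ) 1) (h89 : pstar < 8 / 9)
    (Vplus : ℝ → ℝ) (p : ℝ) (hp : p ∈ Set.Ioc (0 : ℝ) pstar)
    (hdV : DifferentiableAt ℝ Vplus p)
    (hR : c = -lam * (1 - p) * Vplus p + lam * p * (1 - p) * deriv Vplus p)
    (heq : Vplus p = VS lam c v pstar p) :
    deriv Vplus p < deriv (VS lam c v pstar) p := by
  obtain ⟨hps0, hps1⟩ := hpstar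
  obtain ⟨hp0, hpps⟩ := hp
  have hp1 : p < 1 := lt_of_le_of_lt hpps hps1
  have h1p : (0:ℝ) < 1 - p := by linarith
  have hden : lam * pstar * (1 - p) ≠ 0 := by positivity
  -- derivative of VS
  have hVS : HasDerivAt (VS lam c v pstar)
      (v / pstar -
        (-(2 * c) * (lam * pstar * (1 - p)) - 2 * c * (pstar - p) * -(lam * pstar)) /
          (lam * pstar * (1 - p)) ^ 2) p := by
    have hA : HasDerivAt (fun q : ℝ => q / pstar * v) (v / pstar) p := by
      have : HasDerivAt (fun q : ℝ => q / pstar * v) (1 / pstar * v) p :=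
        ((hasDerivAt_id p).div_const pstar).mul_const v
      convert this using 1
      ring
    have hnum : HasDerivAt (fun q : ℝ => 2 * c * (pstar - q)) (-(2*c)) p := by
      have := ((hasDerivAt_const p pstar).sub (hasDerivAt_id p)).const_mul (2*c)
      simpa using this
    have hdenom : HasDerivAt (fun q : ℝ => lam * pstar * (1 - q)) (-(lam*pstar)) p := by
      have := ((hasDerivAt_const p (1:ℝ)).sub (hasDerivAt_id p)).const_mul (lam*pstar)
      simpa using this
    have hB := hnum.div hdenom hden
    unfold VS
    exact hA.sub hB
  rw [hVS.deriv]
  have hkey : 0 < 2 * p^2 - 3 * pstar * p + pstar := by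
    nlinarith [sq_nonneg (4*p - 3*pstar), hps0, h89]
  have hDV : deriv Vplus p = (c + lam * (1 - p) * VS lam c v pstar p) / (lam * p * (1 - p)) := by
    rw [← heq]
    field_simp
    linarith [hR]
  rw [hDV]
  have hsub :
      (v / pstar -
        (-(2 * c) * (lam * pstar * (1 - p)) - 2 * c * (pstar - p) * -(lam * pstar)) /
          (lam * pstar * (1 - p)) ^ 2) -
      (c + lam * (1 - p) * VS lam c v pstar p) / (lam * p * (1 - p))
      = c * (2 * p^2 - 3 * pstar * p + pstar) / (lam * p * pstar * (1 - p)^2) := by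
    unfold VS
    field_simp
    ring
  have hpos : 0 < c * (2 * p^2 - 3 * pstar * p + pstar) / (lam * p * pstar * (1 - p)^2) :=
    div_pos (mul_pos hc hkey) (by positivity)
  linarith [hsub ▸ hpos]
end

section
/- (Lemma B.1, part b) Suppose p* ∈ [8/9, 1). If a real-valued function V₊ is differentiable at a point p ∈ (0, p*], satisfies the R-drifting ODE at p, and V₊(p) = V_S(p), then: V₊′(p) < V_S′(p) if p ∉ [ξ1, ξ2]; V₊′(p) = V_S′(p) if p ∈ {ξ1, ξ2}; and V₊′(p) > V_S′(p) if p ∈ (ξ1, ξ2). -/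
/-- The smaller root of `3p·p* − p* − 2p² = 0`. -/
noncomputable def xi1 (pstar : ℝ) : ℝ :=
  3 * pstar / 4 - Real.sqrt ((3 * pstar / 4) ^ 2 - pstar / 2)

/-- The larger root of `3p·p* − p* − 2p² = 0`. -/
noncomputable def xi2 (pstar : ℝ) : ℝ :=
  3 * pstar / 4 + Real.sqrt ((3 * pstar / 4) ^ 2 - pstar / 2)

set_option maxHeartbeats 1000000 in
/-- Lemma B.1, part (b). -/
theorem lemma_B1_b
    (lam c v pstar : ℝ) (hlam : 0 < lam) (hc : 0 < c) (hv : 0 < v)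
    (hpstar : pstar ∈ Set.Ioo (0 : ℝ) 1) (h89 : 8 / 9 ≤ pstar)
    (Vplus : ℝ → ℝ) (p : ℝ) (hp : p ∈ Set.Ioc (0 : ℝ) pstar)
    (hdV : DifferentiableAt ℝ Vplus p)
    (hR : c = -lam * (1 - p) * Vplus p + lam * p * (1 - p) * deriv Vplus p)
    (heq : Vplus p = VS lam c v pstar p) :
    (p ∉ Set.Icc (xi1 pstar) (xi2 pstar) →
        deriv Vplus p < deriv (VS lam c v pstar) p)
    ∧ (p = xi1 pstar ∨ p = xi2 pstar →
        deriv Vplus p = deriv (VS lam c v pstar) p)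
    ∧ (p ∈ Set.Ioo (xi1 pstar) (xi2 pstar) →
        deriv Vplus p > deriv (VS lam c v pstar) p) := by
  obtain ⟨hps0, hps1⟩ := hpstar
  obtain ⟨hp0, hppstar⟩ := hp
  have hp1 : p < 1 := lt_of_le_of_lt hppstar hps1
  have h1p : (0:ℝ) < 1 - p := by linarith
  have hden : lam * pstar * (1 - p) ≠ 0 := by positivity
  -- derivative of VS
  have h1 : HasDerivAt (fun x : ℝ => x / pstar * v) (v / pstar) p := by
    have := ((hasDerivAt_id p).div_const pstar).mul_const v
    exact this.congr_deriv (by ring)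
  have hnum : HasDerivAt (fun x : ℝ => 2 * c * (pstar - x)) (-(2 * c)) p := by
    have := ((hasDerivAt_const p pstar).sub (hasDerivAt_id p)).const_mul (2 * c)
    simpa using this
  have hdenD : HasDerivAt (fun x : ℝ => lam * pstar * (1 - x)) (-(lam * pstar)) p := by
    have := ((hasDerivAt_const p (1:ℝ)).sub (hasDerivAt_id p)).const_mul (lam * pstar)
    simpa using this
  have h2 : HasDerivAt (fun x : ℝ => 2 * c * (pstar - x) / (lam * pstar * (1 - x)))
      (2 * c * (pstar - 1) / (lam * pstar * (1 - p) ^ 2)) p := by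
    have := hnum.div hdenD hden
    refine this.congr_deriv ?_
    field_simp
    ring
  have hVS : HasDerivAt (VS lam c v pstar)
      (v / pstar - 2 * c * (pstar - 1) / (lam * pstar * (1 - p) ^ 2)) p := by
    have := h1.sub h2
    exact this
  have hVSd : deriv (VS lam c v pstar) p
      = v / pstar - 2 * c * (pstar - 1) / (lam * pstar * (1 - p) ^ 2) := hVS.deriv
  -- key difference formula
  have hD : deriv Vplus p = (c + lam * (1 - p) * Vplus p) / (lam * p * (1 - p)) := by
    rw [eq_div_iff (by positivity)]
    linear_combination -hR
  have key : deriv Vplus p - deriv (VS lam c v pstar) p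
      = c * (3 * p * pstar - pstar - 2 * p ^ 2) / (lam * p * pstar * (1 - p) ^ 2) := by
    rw [hD, heq, hVSd]
    unfold VS
    have hlam' := hlam.ne'
    have hps' := hps0.ne'
    have hp' := hp0.ne'
    have h1p' := h1p.ne'
    field_simp
    ring
  -- factorization
  have hA : (0:ℝ) ≤ (3 * pstar / 4) ^ 2 - pstar / 2 := by nlinarith
  set s := Real.sqrt ((3 * pstar / 4) ^ 2 - pstar / 2) with hsdef
  have hs2 : s ^ 2 = (3 * pstar / 4) ^ 2 - pstar / 2 := Real.sq_sqrt hA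
  have hs0 : 0 ≤ s := Real.sqrt_nonneg _
  have hfact : 3 * p * pstar - pstar - 2 * p ^ 2
      = -2 * (p - xi1 pstar) * (p - xi2 pstar) := by
    unfold xi1 xi2
    rw [← hsdef]
    linear_combination (-2 : ℝ) * hs2
  have hle : xi1 pstar ≤ xi2 pstar := by
    unfold xi1 xi2; rw [← hsdef]; linarith
  have hdpos : (0:ℝ) < lam * p * pstar * (1 - p) ^ 2 := by positivity
  refine ⟨?_, ?_, ?_⟩
  · intro hnot
    rw [Set.mem_Icc, not_and_or, not_le, not_le] at hnot
    have hQ : 3 * p * pstar - pstar - 2 * p ^ 2 < 0 := by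
      rw [hfact]
      rcases hnot with h | h
      · nlinarith [mul_pos (show (0:ℝ) < xi1 pstar - p by linarith)
          (show (0:ℝ) < xi2 pstar - p by linarith)]
      · nlinarith [mul_pos (show (0:ℝ) < p - xi1 pstar by linarith)
          (show (0:ℝ) < p - xi2 pstar by linarith)]
    have hneg : c * (3 * p * pstar - pstar - 2 * p ^ 2) / (lam * p * pstar * (1 - p) ^ 2) < 0 :=
      div_neg_of_neg_of_pos (by nlinarith) hdpos
    linarith [key]
  · intro h
    have hQ : 3 * p * pstar - pstar - 2 * p ^ 2 = 0 := by
      rw [hfact]; rcases h with h | h <;> rw [h] <;> ring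
    rw [hQ] at key
    simp at key
    linarith [key]
  · intro hmem
    obtain ⟨hl, hr⟩ := hmem
    have hQ : 0 < 3 * p * pstar - pstar - 2 * p ^ 2 := by
      rw [hfact]
      nlinarith [mul_pos (show (0:ℝ) < p - xi1 pstar by linarith)
        (show (0:ℝ) < xi2 pstar - p by linarith)]
    have hpos : 0 < c * (3 * p * pstar - pstar - 2 * p ^ 2) / (lam * p * pstar * (1 - p) ^ 2) :=
      div_pos (mul_pos hc hQ) hdpos
    linarith [key]
end

section
/- (Lemma B.2, first part) If either p* < 8/9, or p* ∈ [8/9, 1) and V_S(ξ1) < V_R(ξ1), then V_R(p) > V_S(p) for every p ∈ (0, p*). -/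
/-- The cost term `C_+(p;q)` of the R-drifting strategy with stopping bound `q`. -/
noncomputable def Cplus (lam c p q : ℝ) : ℝ :=
  c / lam * (p * Real.log (q / (1 - q) * ((1 - p) / p)) + 1 - p / q)

/-- The value of the R-drifting strategy with stopping bound `p*`. -/
noncomputable def VR (lam c v pstar p : ℝ) : ℝ :=
  p / pstar * v - Cplus lam c p pstar

/-- Auxiliary function: `g p = f p / p` where `f = (λ/c)(V_R − V_S)`. -/
noncomputable def gAux (pstar x : ℝ) : ℝ :=
  2 * (pstar - x) / (pstar * ((1 - x) * x))
    - Real.log (pstar / (1 - pstar) * ((1 - x) / x)) - 1 / x + 1 / pstar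

lemma gAux_hasDerivAt (pstar : ℝ) (hps : pstar ∈ Set.Ioo (0 : ℝ) 1) {p : ℝ}
    (hp : p ∈ Set.Ioo (0 : ℝ) 1) :
    HasDerivAt (gAux pstar)
      (-(2 * p ^ 2 - 3 * p * pstar + pstar) / (pstar * p ^ 2 * (1 - p) ^ 2)) p := by
  obtain ⟨hps0, hps1⟩ := hps
  obtain ⟨hp0, hp1⟩ := hp
  have hp0' : p ≠ 0 := ne_of_gt hp0
  have hp1' : (1 : ℝ) - p ≠ 0 := by linarith
  have hps0' : pstar ≠ 0 := ne_of_gt hps0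
  have hps1' : (1 : ℝ) - pstar ≠ 0 := by linarith
  have hden : HasDerivAt (fun x : ℝ => pstar * ((1 - x) * x))
      (pstar * ((-1) * p + (1 - p) * 1)) p := by
    exact (((hasDerivAt_id p).const_sub 1).mul (hasDerivAt_id p)).const_mul pstar
  have hdenne : pstar * ((1 - p) * p) ≠ 0 := by positivity
  have h1 : HasDerivAt (fun x : ℝ => 2 * (pstar - x)) (2 * (-1)) p :=
    ((hasDerivAt_id p).const_sub pstar).const_mul 2
  have hfrac := h1.div hden hdenne
  have hinner : HasDerivAt (fun x : ℝ => pstar / (1 - pstar) * ((1 - x) / x))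
      (pstar / (1 - pstar) * (((-1) * p - (1 - p) * 1) / p ^ 2)) p :=
    (((hasDerivAt_id p).const_sub 1).div (hasDerivAt_id p) hp0').const_mul
      (pstar / (1 - pstar))
  have hinnerne : pstar / (1 - pstar) * ((1 - p) / p) ≠ 0 := by
    have h1p : (0:ℝ) < 1 - p := by linarith
    have h1ps : (0:ℝ) < 1 - pstar := by linarith
    positivity
  have hlog := hinner.log hinnerne
  have hinv : HasDerivAt (fun x : ℝ => 1 / x)
      ((0 * p - 1 * 1) / p ^ 2) p := (hasDerivAt_const p 1).div (hasDerivAt_id p) hp0'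
  have hconst : HasDerivAt (fun _ : ℝ => 1 / pstar) 0 p := hasDerivAt_const p (1 / pstar)
  have htot := ((hfrac.sub hlog).sub hinv).add hconst
  refine HasDerivAt.congr_deriv htot ?_
  field_simp
  ring

lemma gAux_pstar (pstar : ℝ) (hps : pstar ∈ Set.Ioo (0 : ℝ) 1) : gAux pstar pstar = 0 := by
  obtain ⟨hps0, hps1⟩ := hps
  have hps0' : pstar ≠ 0 := ne_of_gt hps0
  have hps1' : (1 : ℝ) - pstar ≠ 0 := by linarith
  have : pstar / (1 - pstar) * ((1 - pstar) / pstar) = 1 := by field_simp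
  simp [gAux, this]

lemma VR_sub_VS (lam c v pstar p : ℝ) (hlam : lam ≠ 0) (hps : pstar ≠ 0) (hp : p ≠ 0)
    (hp1 : (1 : ℝ) - p ≠ 0) :
    VR lam c v pstar p - VS lam c v pstar p = c / lam * p * gAux pstar p := by
  unfold VR VS Cplus gAux
  set L := Real.log (pstar / (1 - pstar) * ((1 - p) / p)) with hL
  field_simp
  ring

lemma gAux_cont (pstar : ℝ) (hps : pstar ∈ Set.Ioo (0 : ℝ) 1) {s : Set ℝ}
    (hs : s ⊆ Set.Ioo (0 : ℝ) 1) : ContinuousOn (gAux pstar) s :=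
  fun x hx => ((gAux_hasDerivAt pstar hps (hs hx)).continuousAt).continuousWithinAt

set_option maxHeartbeats 1000000 in
/-- Lemma B.2, first part. -/
theorem lemma_B2_first
    (lam c v pstar : ℝ) (hlam : 0 < lam) (hc : 0 < c) (hv : 0 < v)
    (hpstar : pstar ∈ Set.Ioo (0 : ℝ) 1)
    (hcase : pstar < 8 / 9 ∨
      (8 / 9 ≤ pstar ∧ VS lam c v pstar (xi1 pstar) < VR lam c v pstar (xi1 pstar))) :
    ∀ p ∈ Set.Ioo (0 : ℝ) pstar, VR lam c v pstar p > VS lam c v pstar p := by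
  obtain ⟨hps0, hps1⟩ := hpstar
  have hderiv_sign : ∀ x ∈ Set.Ioo (0 : ℝ) 1, deriv (gAux pstar) x
      = -(2 * x ^ 2 - 3 * x * pstar + pstar) / (pstar * x ^ 2 * (1 - x) ^ 2) :=
    fun x hx => (gAux_hasDerivAt pstar ⟨hps0, hps1⟩ hx).deriv
  intro p hp
  obtain ⟨hp0, hpps⟩ := hp
  have hp1 : p < 1 := lt_trans hpps hps1
  suffices hg : 0 < gAux pstar p by
    have h := VR_sub_VS lam c v pstar p (ne_of_gt hlam) (ne_of_gt hps0)
      (ne_of_gt hp0) (by linarith)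
    nlinarith [mul_pos (mul_pos (div_pos hc hlam) hp0) hg]
  have hg0 : gAux pstar pstar = 0 := gAux_pstar pstar ⟨hps0, hps1⟩
  rcases hcase with h89 | ⟨h89, hxi⟩
  · -- p* < 8/9 : derivative negative everywhere on (0, p*]
    have hanti : StrictAntiOn (gAux pstar) (Set.Ioc 0 pstar) := by
      apply strictAntiOn_of_deriv_neg (convex_Ioc 0 pstar)
      · exact gAux_cont pstar ⟨hps0, hps1⟩ (fun x hx => ⟨hx.1, lt_of_le_of_lt hx.2 hps1⟩)
      · intro x hx
        rw [interior_Ioc] at hx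
        have hx1 : x ∈ Set.Ioo (0 : ℝ) 1 := ⟨hx.1, lt_trans hx.2 hps1⟩
        rw [hderiv_sign x hx1]
        have hQ : 0 < 2 * x ^ 2 - 3 * x * pstar + pstar := by
          nlinarith [sq_nonneg (4 * x - 3 * pstar)]
        apply div_neg_of_neg_of_pos (by linarith)
        have hx0 : 0 < x := hx1.1
        have hx1' : 0 < 1 - x := by linarith [hx1.2]
        positivity
    have := hanti ⟨hp0, le_of_lt hpps⟩ ⟨hps0, le_refl _⟩ hpps
    linarith
  · -- p* ≥ 8/9
    set s := Real.sqrt ((3 * pstar / 4) ^ 2 - pstar / 2) with hsdef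
    have harg : 0 ≤ (3 * pstar / 4) ^ 2 - pstar / 2 := by nlinarith
    have hs2 : s ^ 2 = (3 * pstar / 4) ^ 2 - pstar / 2 := Real.sq_sqrt harg
    have hs0 : 0 ≤ s := Real.sqrt_nonneg _
    set a := xi1 pstar with hadef
    have ha : a = 3 * pstar / 4 - s := rfl
    set b := 3 * pstar / 4 + s with hbdef
    have hQfac : ∀ x : ℝ, 2 * x ^ 2 - 3 * x * pstar + pstar = 2 * (x - a) * (x - b) := by
      intro x
      rw [ha, hbdef]
      linear_combination (2 : ℝ) * hs2
    have hsp : s < 3 * pstar / 4 := by nlinarith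
    have ha0 : 0 < a := by rw [ha]; linarith
    have hsq : s < pstar / 4 := by nlinarith
    have hbp : b < pstar := by rw [hbdef]; linarith
    have hab : a ≤ b := by rw [ha, hbdef]; linarith
    have haps : a < pstar := lt_of_le_of_lt hab hbp
    have hb1 : b < 1 := lt_trans hbp hps1
    have ha1 : a < 1 := lt_of_le_of_lt hab hb1
    have hb0 : 0 < b := lt_of_lt_of_le ha0 hab
    have hga : 0 < gAux pstar a := by
      have h := VR_sub_VS lam c v pstar a (ne_of_gt hlam) (ne_of_gt hps0)
        (ne_of_gt ha0) (by linarith)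
      by_contra hng
      push_neg at hng
      nlinarith [mul_pos (div_pos hc hlam) ha0,
        mul_nonpos_of_nonneg_of_nonpos (le_of_lt (mul_pos (div_pos hc hlam) ha0)) hng]
    have hA1 : StrictAntiOn (gAux pstar) (Set.Ioc 0 a) := by
      apply strictAntiOn_of_deriv_neg (convex_Ioc 0 a)
      · exact gAux_cont pstar ⟨hps0, hps1⟩ (fun x hx => ⟨hx.1, lt_of_le_of_lt hx.2 ha1⟩)
      · intro x hx
        rw [interior_Ioc] at hx
        have hx1 : x ∈ Set.Ioo (0 : ℝ) 1 := ⟨hx.1, lt_trans hx.2 ha1⟩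
        rw [hderiv_sign x hx1]
        have hf : 0 < (a - x) * (b - x) :=
          mul_pos (by linarith [hx.2]) (by linarith [hx.2])
        have hQ : 0 < 2 * x ^ 2 - 3 * x * pstar + pstar := by
          rw [hQfac x]; nlinarith
        apply div_neg_of_neg_of_pos (by linarith)
        have hx0 : 0 < x := hx1.1
        have hx1' : 0 < 1 - x := by linarith [hx1.2]
        positivity
    have hA2 : StrictMonoOn (gAux pstar) (Set.Icc a b) := by
      apply strictMonoOn_of_deriv_pos (convex_Icc a b)
      · exact gAux_cont pstar ⟨hps0, hps1⟩
          (fun x hx => ⟨lt_of_lt_of_le ha0 hx.1, lt_of_le_of_lt hx.2 hb1⟩)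
      · intro x hx
        rw [interior_Icc] at hx
        have hx1 : x ∈ Set.Ioo (0 : ℝ) 1 :=
          ⟨lt_trans ha0 hx.1, lt_trans hx.2 hb1⟩
        rw [hderiv_sign x hx1]
        have hf : 0 < (x - a) * (b - x) :=
          mul_pos (by linarith [hx.1]) (by linarith [hx.2])
        have hQ : 2 * x ^ 2 - 3 * x * pstar + pstar < 0 := by
          rw [hQfac x]; nlinarith
        apply div_pos (by linarith)
        have hx0 : 0 < x := hx1.1
        have hx1' : 0 < 1 - x := by linarith [hx1.2]
        positivity
    have hA3 : StrictAntiOn (gAux pstar) (Set.Icc b pstar) := by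
      apply strictAntiOn_of_deriv_neg (convex_Icc b pstar)
      · exact gAux_cont pstar ⟨hps0, hps1⟩
          (fun x hx => ⟨lt_of_lt_of_le hb0 hx.1, lt_of_le_of_lt hx.2 hps1⟩)
      · intro x hx
        rw [interior_Icc] at hx
        have hx1 : x ∈ Set.Ioo (0 : ℝ) 1 :=
          ⟨lt_trans hb0 hx.1, lt_trans hx.2 hps1⟩
        rw [hderiv_sign x hx1]
        have hf : 0 < (x - a) * (x - b) :=
          mul_pos (by linarith [hx.1]) (by linarith [hx.1])
        have hQ : 0 < 2 * x ^ 2 - 3 * x * pstar + pstar := by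
          rw [hQfac x]; nlinarith
        apply div_neg_of_neg_of_pos (by linarith)
        have hx0 : 0 < x := hx1.1
        have hx1' : 0 < 1 - x := by linarith [hx1.2]
        positivity
    rcases lt_trichotomy p a with hpa | hpa | hpa
    · have := hA1 ⟨hp0, le_of_lt hpa⟩ ⟨ha0, le_refl _⟩ hpa
      linarith
    · rw [hpa]; exact hga
    · rcases le_or_gt p b with hpb | hpb
      · have := hA2 ⟨le_refl _, hab⟩ ⟨le_of_lt hpa, hpb⟩ hpa
        linarith
      · have := hA3 ⟨le_of_lt hpb, le_of_lt hpps⟩ ⟨le_of_lt hbp, le_refl _⟩ hpps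
        linarith
end

section
/- (Lemma B.2, last part) If p* ∈ [8/9, 1) and V_S(ξ1) > V_R(ξ1), then the equation V_R(p) = V_S(p) has exactly two solutions in (0, p*); one solution lies in (0, ξ1) and the other lies in (ξ1, ξ2). -/
open Set Real Filter Topology

noncomputable def Hf (q p : ℝ) : ℝ :=
  p * Real.log (q / (1 - q) * ((1 - p) / p)) + 1 - p / q - 2 * (q - p) / (q * (1 - p))

noncomputable def H1 (q p : ℝ) : ℝ :=
  Real.log (q / (1 - q)) + Real.log (1 - p) - Real.log p
    - p / (1 - p) - 1 - 1 / q + 2 * (1 - q) / (q * (1 - p) ^ 2)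

noncomputable def H2 (q p : ℝ) : ℝ :=
  -(1 / (1 - p)) - 1 / p - 1 / (1 - p) ^ 2 + 4 * (1 - q) / (q * (1 - p) ^ 3)

lemma Hf_eq {q p : ℝ} (hq : q ∈ Ioo (0:ℝ) 1) (hp : p ∈ Ioo (0:ℝ) 1) :
    Hf q p = p * (Real.log (q / (1 - q)) + Real.log (1 - p) - Real.log p)
      + 1 - p / q - 2 * (q - p) / (q * (1 - p)) := by
  obtain ⟨hq0, hq1⟩ := hq
  obtain ⟨hp0, hp1⟩ := hp
  have h1p : (0:ℝ) < 1 - p := by linarith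
  have h1q : (0:ℝ) < 1 - q := by linarith
  have hlog : Real.log ((1 - p) / p) = Real.log (1 - p) - Real.log p :=
    Real.log_div (by positivity) (by positivity)
  rw [Hf, Real.log_mul (by positivity) (by positivity), hlog]
  ring

lemma hasDerivAt_Hf {q p : ℝ} (hq : q ∈ Ioo (0:ℝ) 1) (hp : p ∈ Ioo (0:ℝ) 1) :
    HasDerivAt (Hf q) (H1 q p) p := by
  obtain ⟨hq0, hq1⟩ := hq
  obtain ⟨hp0, hp1⟩ := hp
  have h1p : (0:ℝ) < 1 - p := by linarith
  have hd : HasDerivAt (fun x : ℝ =>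
      x * (Real.log (q / (1 - q)) + Real.log (1 - x) - Real.log x)
        + 1 - x / q - 2 * (q - x) / (q * (1 - x))) (H1 q p) p := by
    have l1 : HasDerivAt (fun x : ℝ => Real.log (1 - x)) (-(1 - p)⁻¹) p := by
      have := (Real.hasDerivAt_log (ne_of_gt h1p)).comp p
        ((hasDerivAt_const p (1:ℝ)).sub (hasDerivAt_id p))
      simpa [Function.comp_def] using this
    have l2 : HasDerivAt Real.log p⁻¹ p := Real.hasDerivAt_log (ne_of_gt hp0)
    have inner : HasDerivAt (fun x : ℝ =>
        Real.log (q / (1 - q)) + Real.log (1 - x) - Real.log x)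
        (0 + -(1 - p)⁻¹ - p⁻¹) p :=
      ((hasDerivAt_const p _).add l1).sub l2
    have prod := (hasDerivAt_id p).mul inner
    have lin : HasDerivAt (fun x : ℝ => x / q) (1 / q) p := by
      simpa using (hasDerivAt_id p).div_const q
    have num : HasDerivAt (fun x : ℝ => 2 * (q - x)) (2 * (0 - 1)) p :=
      ((hasDerivAt_const p q).sub (hasDerivAt_id p)).const_mul (2:ℝ)
    have den : HasDerivAt (fun x : ℝ => q * (1 - x)) (q * (0 - 1)) p :=
      ((hasDerivAt_const p (1:ℝ)).sub (hasDerivAt_id p)).const_mul q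
    have frac := num.div den (by positivity)
    have total := ((prod.add_const 1).sub lin).sub frac
    refine total.congr_deriv ?_
    rw [H1]
    simp only [id_eq]
    field_simp
    ring
  refine hd.congr_of_eventuallyEq ?_
  filter_upwards [isOpen_Ioo.mem_nhds (⟨hp0, hp1⟩ : p ∈ Ioo (0:ℝ) 1)] with x hx
  exact Hf_eq ⟨hq0, hq1⟩ hx

lemma hasDerivAt_H1 {q p : ℝ} (hq : q ∈ Ioo (0:ℝ) 1) (hp : p ∈ Ioo (0:ℝ) 1) :
    HasDerivAt (H1 q) (H2 q p) p := by
  obtain ⟨hq0, hq1⟩ := hq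
  obtain ⟨hp0, hp1⟩ := hp
  have h1p : (0:ℝ) < 1 - p := by linarith
  have l1 : HasDerivAt (fun x : ℝ => Real.log (1 - x)) (-(1 - p)⁻¹) p := by
    have := (Real.hasDerivAt_log (ne_of_gt h1p)).comp p
      ((hasDerivAt_const p (1:ℝ)).sub (hasDerivAt_id p))
    simpa [Function.comp_def] using this
  have l2 : HasDerivAt Real.log p⁻¹ p := Real.hasDerivAt_log (ne_of_gt hp0)
  have l3 : HasDerivAt (fun x : ℝ => x / (1 - x)) (1 / (1 - p) ^ 2) p := by
    have := (hasDerivAt_id p).div ((hasDerivAt_const p (1:ℝ)).sub (hasDerivAt_id p))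
      (ne_of_gt h1p)
    refine this.congr_deriv ?_
    simp only [Pi.sub_apply, id]
    field_simp
    ring
  have den : HasDerivAt (fun x : ℝ => q * (1 - x) ^ 2) (-(2 * q * (1 - p))) p := by
    have hpow : HasDerivAt (fun x : ℝ => (1 - x) ^ 2)
        (((2:ℕ):ℝ) * (1 - p) ^ (2 - 1) * (0 - 1)) p :=
      ((hasDerivAt_const p (1:ℝ)).sub (hasDerivAt_id p)).pow 2
    have := hpow.const_mul q
    refine this.congr_deriv ?_
    push_cast
    ring
  have l4 : HasDerivAt (fun x : ℝ => 2 * (1 - q) / (q * (1 - x) ^ 2))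
      (4 * (1 - q) / (q * (1 - p) ^ 3)) p := by
    have := (hasDerivAt_const p (2 * (1 - q))).div den (by positivity)
    refine this.congr_deriv ?_
    field_simp
    ring
  have total := (((((hasDerivAt_const p (Real.log (q / (1 - q)))).add l1).sub
    l2).sub l3).sub_const 1).sub_const (1 / q) |>.add l4
  have heq : H2 q p = 0 + -(1 - p)⁻¹ - p⁻¹ - 1 / (1 - p) ^ 2
      + 4 * (1 - q) / (q * (1 - p) ^ 3) := by
    rw [H2]; ring
  rw [heq]
  exact total

lemma H2_sign {q p : ℝ} (hq : q ∈ Ioo (0:ℝ) 1) (hp : p ∈ Ioo (0:ℝ) 1) :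
    H2 q p = (4 * p - q - 3 * p * q) / (p * q * (1 - p) ^ 3) := by
  obtain ⟨hq0, hq1⟩ := hq
  obtain ⟨hp0, hp1⟩ := hp
  have h1p : (0:ℝ) < 1 - p := by linarith
  rw [H2]
  field_simp
  ring

lemma Hf_at_q {q : ℝ} (hq : q ∈ Ioo (0:ℝ) 1) : Hf q q = 0 := by
  obtain ⟨hq0, hq1⟩ := hq
  have h1q : (0:ℝ) < 1 - q := by linarith
  have : q / (1 - q) * ((1 - q) / q) = 1 := by field_simp
  rw [Hf, this, Real.log_one]
  field_simp
  ring

lemma log_four_lt : Real.log 4 < 1.4 := by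
  have h4 : (4:ℝ) = 2 ^ 2 := by norm_num
  rw [h4, Real.log_pow]
  have := Real.log_two_lt_d9
  push_cast
  linarith

-- value at m = q/(4-3q)
lemma Hf_at_m {q : ℝ} (hq : q ∈ Ioo (0:ℝ) 1) : Hf q (q / (4 - 3 * q)) < 0 := by
  obtain ⟨hq0, hq1⟩ := hq
  have h1q : (0:ℝ) < 1 - q := by linarith
  have h43 : (0:ℝ) < 4 - 3 * q := by linarith
  have h43' : (4:ℝ) - q * 3 ≠ 0 := by intro h; linarith
  set m := q / (4 - 3 * q) with hm
  have hm0 : 0 < m := by positivity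
  have hmq : m < q := by
    rw [hm, div_lt_iff₀ h43]
    nlinarith
  have hm1 : m < 1 := by linarith
  have h1m : (0:ℝ) < 1 - m := by linarith
  have harg : q / (1 - q) * ((1 - m) / m) = 4 := by
    rw [hm]
    field_simp
    ring
  have hmoq : m / q = 1 / (4 - 3 * q) := by
    rw [hm]
    field_simp
  have hlast : 2 * (q - m) / (q * (1 - m)) = 3 / 2 := by
    rw [div_eq_div_iff (by positivity) (by norm_num : (2:ℝ) ≠ 0), hm]
    field_simp
    ring
  rw [Hf, harg, hmoq, hlast]
  have hlog : Real.log 4 < 1.4 := log_four_lt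
  have hmv : m * (4 - 3 * q) = q := by
    rw [hm]; field_simp
  have hlogpos : (0:ℝ) < Real.log 4 := by
    have : (1:ℝ) < 4 := by norm_num
    exact Real.log_pos this
  -- goal: m * log 4 + 1 - 1/(4-3q) - 3/2 < 0
  have h1 : m * Real.log 4 < m * 1.4 := by
    exact (mul_lt_mul_iff_right₀ hm0).mpr hlog
  have h2 : m * 1.4 + 1 - 1 / (4 - 3 * q) - 3 / 2 < 0 := by
    have hd : 1 / (4 - 3 * q) * (4 - 3 * q) = 1 := by field_simp
    nlinarith [hmv, hd, h43, hq1, hm0]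
  linarith

lemma xi_bounds {q : ℝ} (hq : q ∈ Ioo (0:ℝ) 1) (h89 : 8 / 9 ≤ q) :
    0 < 3 * q / 4 - Real.sqrt ((3 * q / 4) ^ 2 - q / 2) ∧
    3 * q / 4 - Real.sqrt ((3 * q / 4) ^ 2 - q / 2) ≤ q / (4 - 3 * q) ∧
    q / (4 - 3 * q) ≤ 3 * q / 4 + Real.sqrt ((3 * q / 4) ^ 2 - q / 2) := by
  obtain ⟨hq0, hq1⟩ := hq
  have h43 : (0:ℝ) < 4 - 3 * q := by linarith
  set m := q / (4 - 3 * q) with hm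
  have hmv : m * (4 - 3 * q) = q := by rw [hm]; exact div_mul_cancel₀ q (ne_of_gt h43)
  set D := (3 * q / 4) ^ 2 - q / 2 with hD
  have hD0 : 0 ≤ D := by rw [hD]; nlinarith
  have hsq : Real.sqrt D < 3 * q / 4 := by
    have h1 : D < (3 * q / 4) ^ 2 := by rw [hD]; nlinarith
    calc Real.sqrt D < Real.sqrt ((3 * q / 4) ^ 2) := Real.sqrt_lt_sqrt hD0 h1
      _ = 3 * q / 4 := Real.sqrt_sq (by linarith)
  have hkey : (m - 3 * q / 4) ^ 2 ≤ D := by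
    have h89' : 8 ≤ 9 * q := by linarith
    have hfac : 0 ≤ q * (9 * q - 8) * (1 - q) :=
      mul_nonneg (mul_nonneg (by linarith) (by linarith)) (by linarith)
    have hlin : (m - 3 * q / 4) * (4 - 3 * q) = q * (9 * q - 8) / 4 := by
      linear_combination hmv
    have h2 : ((m - 3 * q / 4) * (4 - 3 * q)) ^ 2 = (q * (9 * q - 8) / 4) ^ 2 := by
      rw [hlin]
    rw [mul_pow] at h2
    have h3 : D * (4 - 3 * q) ^ 2 = (q * (9 * q - 8) / 4) ^ 2 + q * (9 * q - 8) * (1 - q) := by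
      rw [hD]; ring
    have h4 : (m - 3 * q / 4) ^ 2 * (4 - 3 * q) ^ 2 ≤ D * (4 - 3 * q) ^ 2 := by
      linarith
    exact (mul_le_mul_iff_left₀ (by positivity : (0:ℝ) < (4 - 3 * q) ^ 2)).mp h4
  have habs : |m - 3 * q / 4| ≤ Real.sqrt D := by
    rw [← Real.sqrt_sq_eq_abs]
    exact Real.sqrt_le_sqrt hkey
  rw [abs_le] at habs
  exact ⟨by linarith, by linarith [habs.2], by linarith [habs.1]⟩

lemma tendsto_Hf_zero {q : ℝ} (hq : q ∈ Ioo (0:ℝ) 1) :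
    Tendsto (Hf q) (𝓝[>] (0:ℝ)) (𝓝 (-1)) := by
  obtain ⟨hq0, hq1⟩ := hq
  set L := Real.log (q / (1 - q)) with hL
  have tA : Tendsto (fun p : ℝ => p * (L + Real.log (1 - p)) + 1 - p / q
      - 2 * (q - p) / (q * (1 - p))) (𝓝[>] (0:ℝ)) (𝓝 (-1)) := by
    have c1 : ContinuousAt (fun p : ℝ => Real.log (1 - p)) 0 :=
      (Real.continuousAt_log (by norm_num)).comp
        ((continuous_const.sub continuous_id).continuousAt)
    have c2 : ContinuousAt (fun p : ℝ => p * (L + Real.log (1 - p)) + 1 - p / q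
        - 2 * (q - p) / (q * (1 - p))) 0 := by
      refine ContinuousAt.sub (ContinuousAt.sub (ContinuousAt.add
        (continuousAt_id.mul (continuousAt_const.add c1)) continuousAt_const)
        (continuousAt_id.div_const q)) ?_
      exact ContinuousAt.div
        ((continuousAt_const.sub continuousAt_id).const_mul 2)
        ((continuousAt_const.sub continuousAt_id).const_mul q)
        (by simpa using hq0.ne')
    have := c2.tendsto
    have h0 : 0 * (L + Real.log (1 - 0)) + 1 - 0 / q - 2 * (q - 0) / (q * (1 - 0)) = -1 := by
      field_simp
      norm_num
      ring
    rw [h0] at this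
    exact this.mono_left nhdsWithin_le_nhds
  have tB : Tendsto (fun p : ℝ => p * Real.log p) (𝓝[>] (0:ℝ)) (𝓝 0) := by
    have := tendsto_log_mul_rpow_nhdsGT_zero (one_pos)
    simp only [Real.rpow_one] at this
    simpa [mul_comm] using this
  have tC := tA.sub tB
  rw [show (-1 : ℝ) - 0 = -1 by ring] at tC
  have hG : ∀ᶠ p in 𝓝[>] (0:ℝ), (fun p : ℝ => p * (L + Real.log (1 - p)) + 1 - p / q
      - 2 * (q - p) / (q * (1 - p)) - p * Real.log p) p = Hf q p := by
    filter_upwards [Ioo_mem_nhdsGT_of_mem (by constructor <;> norm_num : (0:ℝ) ∈ Ico (0:ℝ) 1)]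
      with x hx
    rw [Hf_eq ⟨hq0, hq1⟩ hx]
    ring
  exact tC.congr' hG

lemma continuousOn_Hf {q : ℝ} (hq : q ∈ Ioo (0:ℝ) 1) :
    ContinuousOn (Hf q) (Ioo (0:ℝ) 1) := fun x hx =>
  (hasDerivAt_Hf hq hx).continuousAt.continuousWithinAt

lemma deriv2_Hf {q p : ℝ} (hq : q ∈ Ioo (0:ℝ) 1) (hp : p ∈ Ioo (0:ℝ) 1) :
    deriv (deriv (Hf q)) p = H2 q p := by
  have heq : deriv (Hf q) =ᶠ[𝓝 p] H1 q := by
    filter_upwards [isOpen_Ioo.mem_nhds hp] with x hx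
    exact (hasDerivAt_Hf hq hx).deriv
  rw [heq.deriv_eq]
  exact (hasDerivAt_H1 hq hp).deriv

lemma strictConcaveOn_Hf {q : ℝ} (hq : q ∈ Ioo (0:ℝ) 1) :
    StrictConcaveOn ℝ (Ioo (0:ℝ) (q / (4 - 3 * q))) (Hf q) := by
  obtain ⟨hq0, hq1⟩ := hq
  have h43 : (0:ℝ) < 4 - 3 * q := by linarith
  have hm1 : q / (4 - 3 * q) < 1 := by
    rw [div_lt_one h43]; linarith
  have hsub : Ioo (0:ℝ) (q / (4 - 3 * q)) ⊆ Ioo (0:ℝ) 1 := fun x hx =>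
    ⟨hx.1, lt_trans hx.2 hm1⟩
  apply strictConcaveOn_of_deriv2_neg (convex_Ioo _ _)
    ((continuousOn_Hf ⟨hq0, hq1⟩).mono hsub)
  intro x hx
  rw [interior_Ioo] at hx
  have hx1 : x ∈ Ioo (0:ℝ) 1 := hsub hx
  show deriv (deriv (Hf q)) x < 0
  rw [deriv2_Hf ⟨hq0, hq1⟩ hx1, H2_sign ⟨hq0, hq1⟩ hx1]
  apply div_neg_of_neg_of_pos
  · have := hx.2
    rw [lt_div_iff₀ h43] at this
    nlinarith
  · have h1x : (0:ℝ) < 1 - x := by linarith [hx1.2]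
    exact mul_pos (mul_pos hx1.1 hq0) (pow_pos h1x 3)

lemma convexOn_Hf {q : ℝ} (hq : q ∈ Ioo (0:ℝ) 1) :
    ConvexOn ℝ (Icc (q / (4 - 3 * q)) q) (Hf q) := by
  obtain ⟨hq0, hq1⟩ := hq
  have h43 : (0:ℝ) < 4 - 3 * q := by linarith
  have hm0 : 0 < q / (4 - 3 * q) := by positivity
  have hsub : Icc (q / (4 - 3 * q)) q ⊆ Ioo (0:ℝ) 1 := fun x hx =>
    ⟨lt_of_lt_of_le hm0 hx.1, lt_of_le_of_lt hx.2 hq1⟩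
  have hmq : q / (4 - 3 * q) ≤ q := by
    rw [div_le_iff₀ h43]; nlinarith
  apply convexOn_of_deriv2_nonneg (convex_Icc _ _)
    ((continuousOn_Hf ⟨hq0, hq1⟩).mono hsub)
  · intro x hx
    rw [interior_Icc] at hx
    exact (hasDerivAt_Hf ⟨hq0, hq1⟩ (hsub (Ioo_subset_Icc_self hx))).differentiableAt.differentiableWithinAt
  · intro x hx
    rw [interior_Icc] at hx
    have hx1 : x ∈ Ioo (0:ℝ) 1 := hsub (Ioo_subset_Icc_self hx)
    have heq : deriv (Hf q) =ᶠ[𝓝 x] H1 q := by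
      filter_upwards [isOpen_Ioo.mem_nhds hx1] with y hy
      exact (hasDerivAt_Hf ⟨hq0, hq1⟩ hy).deriv
    exact ((hasDerivAt_H1 ⟨hq0, hq1⟩ hx1).congr_of_eventuallyEq heq).differentiableAt.differentiableWithinAt
  · intro x hx
    rw [interior_Icc] at hx
    have hx1 : x ∈ Ioo (0:ℝ) 1 := hsub (Ioo_subset_Icc_self hx)
    show 0 ≤ deriv (deriv (Hf q)) x
    rw [deriv2_Hf ⟨hq0, hq1⟩ hx1, H2_sign ⟨hq0, hq1⟩ hx1]
    apply div_nonneg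
    · have := hx.1
      rw [div_lt_iff₀ h43] at this
      nlinarith
    · have h1x : (0:ℝ) < 1 - x := by linarith [hx1.2]
      exact le_of_lt (mul_pos (mul_pos hx1.1 hq0) (pow_pos h1x 3))

lemma no_three_zeros {f : ℝ → ℝ} {s : Set ℝ} (hf : StrictConcaveOn ℝ s f)
    {x y z : ℝ} (hx : x ∈ s) (hz : z ∈ s) (hxy : x < y) (hyz : y < z)
    (h0x : f x = 0) (h0y : f y = 0) (h0z : f z = 0) : False := by
  have hxz : x < z := lt_trans hxy hyz
  have ha : 0 < (z - y) / (z - x) := by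
    apply div_pos <;> linarith
  have hb : 0 < (y - x) / (z - x) := by
    apply div_pos <;> linarith
  have hne : z - x ≠ 0 := by linarith
  have hab : (z - y) / (z - x) + (y - x) / (z - x) = 1 := by
    rw [← add_div]
    field_simp
    ring
  have := hf.2 hx hz (ne_of_lt hxz) ha hb hab
  rw [h0x, h0z, smul_eq_mul, smul_eq_mul, smul_eq_mul, smul_eq_mul] at this
  have hcomb : (z - y) / (z - x) * x + (y - x) / (z - x) * z = y := by
    field_simp
    ring
  rw [hcomb] at this
  simp only [mul_zero, add_zero, zero_add] at this
  rw [h0y] at this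
  exact lt_irrefl 0 this


/-- Lemma B.2, last part: if `p* ∈ [8/9,1)` and `V_S(ξ1) > V_R(ξ1)`, then `V_R = V_S` has
exactly two solutions on `(0, p*)`, one in `(0, ξ1)` and one in `(ξ1, ξ2)`. -/
theorem lemma_B2_last
    (lam c v pstar : ℝ) (hlam : 0 < lam) (hc : 0 < c) (hv : 0 < v)
    (hpstar : pstar ∈ Set.Ioo (0 : ℝ) 1) (h89 : 8 / 9 ≤ pstar)
    (hxi : VS lam c v pstar (xi1 pstar) > VR lam c v pstar (xi1 pstar)) :
    ∃ a b : ℝ, a ∈ Set.Ioo (0 : ℝ) (xi1 pstar) ∧ b ∈ Set.Ioo (xi1 pstar) (xi2 pstar) ∧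
      VR lam c v pstar a = VS lam c v pstar a ∧
      VR lam c v pstar b = VS lam c v pstar b ∧
      ∀ p ∈ Set.Ioo (0 : ℝ) pstar,
        VR lam c v pstar p = VS lam c v pstar p → p = a ∨ p = b := by
  obtain ⟨hq0, hq1⟩ := hpstar
  set q := pstar with hqdef
  have hq : q ∈ Ioo (0:ℝ) 1 := ⟨hq0, hq1⟩
  have h43 : (0:ℝ) < 4 - 3 * q := by linarith
  set m := q / (4 - 3 * q) with hmdef
  have hm0 : 0 < m := by positivity
  have hmq : m < q := by
    rw [hmdef, div_lt_iff₀ h43]; nlinarith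
  have hm1 : m < 1 := lt_trans hmq hq1
  -- xi bounds
  obtain ⟨hx0, hx1m, hmx2⟩ := xi_bounds hq h89
  have hxi1_eq : xi1 q = 3 * q / 4 - Real.sqrt ((3 * q / 4) ^ 2 - q / 2) := rfl
  have hxi2_eq : xi2 q = 3 * q / 4 + Real.sqrt ((3 * q / 4) ^ 2 - q / 2) := rfl
  rw [← hxi1_eq] at hx0 hx1m
  rw [← hxi2_eq] at hmx2
  have hxi1_lt1 : xi1 q < 1 := lt_trans (lt_of_le_of_lt hx1m hmq) hq1
  have hxi1_mem : xi1 q ∈ Ioo (0:ℝ) 1 := ⟨hx0, hxi1_lt1⟩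
  -- translation between VR=VS and Hf = 0
  have key : ∀ p ∈ Ioo (0:ℝ) 1,
      VS lam c v q p - VR lam c v q p = c / lam * Hf q p := by
    intro p hp
    have h1p : p < 1 := hp.2
    have hp0 : 0 < p := hp.1
    rw [VS, VR, Cplus, Hf]
    have h1pne : (1:ℝ) - p ≠ 0 := by linarith
    field_simp
    ring
  have hcl : 0 < c / lam := div_pos hc hlam
  have iffzero : ∀ p ∈ Ioo (0:ℝ) 1,
      (VR lam c v q p = VS lam c v q p ↔ Hf q p = 0) := by
    intro p hp
    constructor
    · intro h
      have hk := key p hp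
      have h0 : c / lam * Hf q p = 0 := by rw [← hk, h, sub_self]
      exact (mul_eq_zero.mp h0).resolve_left (ne_of_gt hcl)
    · intro h
      have := key p hp
      rw [h, mul_zero] at this
      linarith
  -- H(xi1) > 0
  have hH1 : 0 < Hf q (xi1 q) := by
    have hk := key (xi1 q) hxi1_mem
    have hpos : 0 < c / lam * Hf q (xi1 q) := by
      rw [← hk]; linarith [hxi]
    rcases mul_pos_iff.mp hpos with ⟨_, h⟩ | ⟨h, _⟩
    · exact h
    · linarith
  have hHm : Hf q m < 0 := Hf_at_m hq
  have hx1_lt_m : xi1 q < m := by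
    rcases lt_or_eq_of_le hx1m with h | h
    · exact h
    · rw [h] at hH1; linarith
  -- anchor point near zero
  have htend := tendsto_Hf_zero hq
  have ev1 : ∀ᶠ p in 𝓝[>] (0:ℝ), Hf q p < 0 :=
    htend.eventually_lt_const (by norm_num : (-1:ℝ) < 0)
  have ev2 : Ioo (0:ℝ) (xi1 q) ∈ 𝓝[>] (0:ℝ) :=
    Ioo_mem_nhdsGT_of_mem ⟨le_refl 0, hx0⟩
  obtain ⟨x₀, hx₀neg, hx₀mem⟩ := (ev1.and ev2).exists
  -- zero a in (x₀, xi1)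
  have hsubA : Icc x₀ (xi1 q) ⊆ Ioo (0:ℝ) 1 := fun y hy =>
    ⟨lt_of_lt_of_le hx₀mem.1 hy.1, lt_of_le_of_lt hy.2 hxi1_lt1⟩
  obtain ⟨a, haIoo, haz⟩ : ∃ a ∈ Ioo x₀ (xi1 q), Hf q a = 0 := by
    have := intermediate_value_Ioo (le_of_lt hx₀mem.2)
      ((continuousOn_Hf hq).mono hsubA)
    have h0 : (0:ℝ) ∈ Ioo (Hf q x₀) (Hf q (xi1 q)) := ⟨hx₀neg, hH1⟩
    obtain ⟨a, ha, haz⟩ := this h0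
    exact ⟨a, ha, haz⟩
  -- zero b in (xi1, m)
  have hsubB : Icc (xi1 q) m ⊆ Ioo (0:ℝ) 1 := fun y hy =>
    ⟨lt_of_lt_of_le hx0 hy.1, lt_of_le_of_lt hy.2 hm1⟩
  obtain ⟨b, hbIoo, hbz⟩ : ∃ b ∈ Ioo (xi1 q) m, Hf q b = 0 := by
    have := intermediate_value_Ioo' (le_of_lt hx1_lt_m)
      ((continuousOn_Hf hq).mono hsubB)
    have h0 : (0:ℝ) ∈ Ioo (Hf q m) (Hf q (xi1 q)) := ⟨hHm, hH1⟩
    obtain ⟨b, hb, hbz⟩ := this h0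
    exact ⟨b, hb, hbz⟩
  -- no zeros in [m, q)
  have hnozero : ∀ p, m ≤ p → p < q → Hf q p < 0 := by
    intro p hmp hpq
    have hconv := convexOn_Hf hq
    rw [← hmdef] at hconv
    set t := (p - m) / (q - m) with htdef
    have hqm : 0 < q - m := by linarith
    have ht0 : 0 ≤ t := div_nonneg (by linarith) (le_of_lt hqm)
    have ht1 : t < 1 := by
      rw [htdef, div_lt_one hqm]; linarith
    have hsum : (1 - t) + t = 1 := by ring
    have hcomb : (1 - t) * m + t * q = p := by
      rw [htdef]; field_simp; ring
    have hmmem : m ∈ Icc m q := ⟨le_refl m, le_of_lt hmq⟩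
    have hqmem : q ∈ Icc m q := ⟨le_of_lt hmq, le_refl q⟩
    have := hconv.2 hmmem hqmem (by linarith : (0:ℝ) ≤ 1 - t) ht0 hsum
    rw [smul_eq_mul, smul_eq_mul, smul_eq_mul, smul_eq_mul, hcomb,
      Hf_at_q hq, mul_zero, add_zero] at this
    have h1t : 0 < 1 - t := by linarith
    calc Hf q p ≤ (1 - t) * Hf q m := this
      _ < 0 := mul_neg_of_pos_of_neg h1t hHm
  -- every zero in (0,q) lies in (0,m)
  have hzm : ∀ p ∈ Ioo (0:ℝ) q, Hf q p = 0 → p < m := by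
    intro p hp hz
    by_contra h
    push_neg at h
    exact absurd hz (ne_of_lt (hnozero p h hp.2))
  have hconc := strictConcaveOn_Hf hq
  rw [← hmdef] at hconc
  have haM : a ∈ Ioo (0:ℝ) m := ⟨lt_trans hx₀mem.1 haIoo.1, lt_trans haIoo.2 hx1_lt_m⟩
  have hbM : b ∈ Ioo (0:ℝ) m := ⟨lt_trans hx0 hbIoo.1, hbIoo.2⟩
  have hab : a < b := lt_trans haIoo.2 hbIoo.1
  refine ⟨a, b, ⟨lt_trans hx₀mem.1 haIoo.1, haIoo.2⟩,
    ⟨hbIoo.1, lt_of_lt_of_le hbIoo.2 hmx2⟩,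
    (iffzero a (hsubA (Ioo_subset_Icc_self haIoo))).mpr haz,
    (iffzero b (hsubB (Ioo_subset_Icc_self hbIoo))).mpr hbz, ?_⟩
  intro p hp heq
  have hp1 : p ∈ Ioo (0:ℝ) 1 := ⟨hp.1, lt_trans hp.2 hq1⟩
  have hpz : Hf q p = 0 := (iffzero p hp1).mp heq
  have hpM : p ∈ Ioo (0:ℝ) m := ⟨hp.1, hzm p hp hpz⟩
  by_contra hcon
  push_neg at hcon
  obtain ⟨hpa, hpb⟩ := hcon
  rcases lt_trichotomy p a with h | h | h
  · exact no_three_zeros hconc hpM hbM h hab hpz haz hbz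
  · exact hpa h
  · rcases lt_trichotomy p b with h' | h' | h'
    · exact no_three_zeros hconc haM hbM h h' haz hpz hbz
    · exact hpb h'
    · exact no_three_zeros hconc haM hpM hab h' haz hbz hpz
end

section
/- (Lemma B.5, part b, first claim) Suppose p* ∈ (8/9, 1). Define V_RS(p) := (p/ξ1)·V_S(ξ1) − C_+(p; ξ1). Then V_RS(p) > V_S(p) for every p ∈ (0, ξ1). -/
/-- The value of R-drifting until `ξ1` followed by the stationary strategy. -/
noncomputable def VRS (lam c v pstar p : ℝ) : ℝ :=
  p / xi1 pstar * VS lam c v pstar (xi1 pstar) - Cplus lam c p (xi1 pstar)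

lemma xi1_facts {pstar : ℝ} (h1 : 8/9 < pstar) (h2 : pstar < 1) :
    0 < xi1 pstar ∧ xi1 pstar < 1 ∧
    2 * (xi1 pstar)^2 - 3*pstar*(xi1 pstar) + pstar = 0 ∧
    xi1 pstar * (4 - 3*pstar) < pstar := by
  have hD : (0:ℝ) ≤ (3 * pstar / 4) ^ 2 - pstar / 2 := by nlinarith
  have hs := Real.sq_sqrt hD
  have hsn := Real.sqrt_nonneg ((3 * pstar / 4) ^ 2 - pstar / 2)
  have hlt : Real.sqrt ((3 * pstar / 4) ^ 2 - pstar / 2) < 3 * pstar / 4 := by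
    rw [show ((3 * pstar / 4) ^ 2 - pstar / 2 : ℝ) = pstar/16 * (9*pstar - 8) by ring] at hD ⊢
    rw [Real.sqrt_lt' (by nlinarith)]
    nlinarith
  refine ⟨by unfold xi1; linarith, by unfold xi1; nlinarith, ?_, ?_⟩
  · unfold xi1; nlinarith [hs]
  · unfold xi1; nlinarith [hs, hsn]

noncomputable def phi (lam c v pstar x : ℝ) : ℝ :=
  VS lam c v pstar (xi1 pstar) / xi1 pstar - v / pstar
    - c / lam * (Real.log (xi1 pstar / (1 - xi1 pstar) * ((1 - x) / x))
        - 1 / (1 - x) - 1 / xi1 pstar)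
    - 2 * c * (1 - pstar) / (lam * pstar * (1 - x) ^ 2)

noncomputable def psi (lam c pstar x : ℝ) : ℝ :=
  c / lam * (1 / (x * (1 - x)) + 1 / (1 - x) ^ 2)
    - 4 * c * (1 - pstar) / (lam * pstar * (1 - x) ^ 3)

lemma hasDerivAt_log_term {ξ x : ℝ} (hξ0 : 0 < ξ) (hξ1 : ξ < 1)
    (hx0 : 0 < x) (hx1 : x < 1) :
    HasDerivAt (fun y => Real.log (ξ / (1 - ξ) * ((1 - y) / y)))
      (-(1 / (x * (1 - x)))) x := by
  have hxne : x ≠ 0 := hx0.ne'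
  have h1x : (0:ℝ) < 1 - x := by linarith
  have h1ξ : (0:ℝ) < 1 - ξ := by linarith
  have hu : HasDerivAt (fun y => ξ / (1 - ξ) * ((1 - y) / y))
      (ξ / (1 - ξ) * (((-1) * x - (1 - x) * 1) / x ^ 2)) x := by
    exact (((hasDerivAt_id x).const_sub 1).div (hasDerivAt_id x) hxne).const_mul _
  have hne : ξ / (1 - ξ) * ((1 - x) / x) ≠ 0 := by positivity
  have := hu.log hne
  convert this using 1
  field_simp
  ring

lemma hasDerivAt_G {lam c v pstar x : ℝ} (hlam : 0 < lam)
    (hp0 : 0 < pstar) (hp1 : pstar < 1)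
    (hξ0 : 0 < xi1 pstar) (hξ1 : xi1 pstar < 1)
    (hx0 : 0 < x) (hx1 : x < 1) :
    HasDerivAt (fun y => VRS lam c v pstar y - VS lam c v pstar y)
      (phi lam c v pstar x) x := by
  set ξ := xi1 pstar with hξ
  have hxne : x ≠ 0 := hx0.ne'
  have h1x : (0:ℝ) < 1 - x := by linarith
  have hden : lam * pstar * (1 - x) ≠ 0 := by positivity
  have t1 : HasDerivAt (fun y : ℝ => y / ξ * VS lam c v pstar ξ)
      (1 / ξ * VS lam c v pstar ξ) x :=
    ((hasDerivAt_id x).div_const ξ).mul_const _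
  have hL := hasDerivAt_log_term (ξ := ξ) hξ0 hξ1 hx0 hx1
  have t2 : HasDerivAt
      (fun y : ℝ => c / lam *
        (y * Real.log (ξ / (1 - ξ) * ((1 - y) / y)) + 1 - y / ξ))
      (c / lam * ((1 * Real.log (ξ / (1 - ξ) * ((1 - x) / x))
          + x * (-(1 / (x * (1 - x))))) - 1 / ξ)) x := by
    exact ((((hasDerivAt_id x).mul hL).add_const 1).sub
      ((hasDerivAt_id x).div_const ξ)).const_mul _
  have t3 : HasDerivAt (fun y : ℝ => y / pstar * v) (1 / pstar * v) x :=
    ((hasDerivAt_id x).div_const pstar).mul_const v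
  have t4 : HasDerivAt (fun y : ℝ => 2 * c * (pstar - y) / (lam * pstar * (1 - y)))
      ((2 * c * (-1) * (lam * pstar * (1 - x))
         - 2 * c * (pstar - x) * (lam * pstar * (-1))) / (lam * pstar * (1 - x)) ^ 2) x := by
    exact (((hasDerivAt_id x).const_sub pstar).const_mul (2*c)).div
      (((hasDerivAt_id x).const_sub 1).const_mul (lam * pstar)) hden
  have hG := (t1.sub t2).sub (t3.sub t4)
  have : HasDerivAt (fun y => VRS lam c v pstar y - VS lam c v pstar y)
      ((1 / ξ * VS lam c v pstar ξ
        - c / lam * ((1 * Real.log (ξ / (1 - ξ) * ((1 - x) / x))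
          + x * (-(1 / (x * (1 - x))))) - 1 / ξ))
       - (1 / pstar * v - (2 * c * (-1) * (lam * pstar * (1 - x))
         - 2 * c * (pstar - x) * (lam * pstar * (-1))) / (lam * pstar * (1 - x)) ^ 2)) x := hG
  convert this using 1
  unfold phi
  rw [← hξ]
  field_simp
  ring

lemma hasDerivAt_phi {lam c v pstar x : ℝ} (hlam : 0 < lam)
    (hp0 : 0 < pstar) (hξ0 : 0 < xi1 pstar) (hξ1 : xi1 pstar < 1)
    (hx0 : 0 < x) (hx1 : x < 1) :
    HasDerivAt (phi lam c v pstar) (psi lam c pstar x) x := by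
  set ξ := xi1 pstar with hξ
  have h1x : (0:ℝ) < 1 - x := by linarith
  have h1xne : (1:ℝ) - x ≠ 0 := h1x.ne'
  have hden2 : lam * pstar * (1 - x) ^ 2 ≠ 0 := by positivity
  have hL := hasDerivAt_log_term (ξ := ξ) hξ0 hξ1 hx0 hx1
  have t1 : HasDerivAt (fun y : ℝ => 1 / (1 - y))
      ((0 * (1 - x) - 1 * (-1)) / (1 - x) ^ 2) x :=
    (hasDerivAt_const x 1).div ((hasDerivAt_id x).const_sub 1) h1xne
  have t2 : HasDerivAt
      (fun y : ℝ => c / lam * (Real.log (ξ / (1 - ξ) * ((1 - y) / y))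
          - 1 / (1 - y) - 1 / ξ))
      (c / lam * ((-(1 / (x * (1 - x)))) - (0 * (1 - x) - 1 * (-1)) / (1 - x) ^ 2)) x :=
    ((hL.sub t1).sub_const _).const_mul _
  have t3 : HasDerivAt
      (fun y : ℝ => 2 * c * (1 - pstar) / (lam * pstar * (1 - y) ^ 2))
      ((0 * (lam * pstar * (1 - x) ^ 2) - 2 * c * (1 - pstar) *
          (lam * pstar * ((2:ℕ) * (1 - x) ^ 1 * (-1)))) / (lam * pstar * (1 - x) ^ 2) ^ 2) x := by
    exact (hasDerivAt_const x _).div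
      ((((hasDerivAt_id x).const_sub 1).pow 2).const_mul (lam * pstar)) hden2
  have hphi := (((hasDerivAt_const x (VS lam c v pstar ξ / ξ - v / pstar)).sub t2).sub t3)
  have h2 : HasDerivAt (phi lam c v pstar)
      ((0 - c / lam * ((-(1 / (x * (1 - x)))) - (0 * (1 - x) - 1 * (-1)) / (1 - x) ^ 2))
        - (0 * (lam * pstar * (1 - x) ^ 2) - 2 * c * (1 - pstar) *
          (lam * pstar * ((2:ℕ) * (1 - x) ^ 1 * (-1)))) / (lam * pstar * (1 - x) ^ 2) ^ 2) x := hphi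
  convert h2 using 1
  unfold psi
  field_simp
  ring

lemma psi_pos {lam c pstar x : ℝ} (hlam : 0 < lam) (hc : 0 < c)
    (h1 : 8/9 < pstar) (h2 : pstar < 1)
    (hx0 : 0 < x) (hx : x < xi1 pstar) :
    0 < psi lam c pstar x := by
  obtain ⟨hξ0, hξ1, hξq, hξρ⟩ := xi1_facts h1 h2
  have hx1 : x < 1 := hx.trans hξ1
  have h1x : (0:ℝ) < 1 - x := by linarith
  have hp0 : (0:ℝ) < pstar := by linarith
  have hkey : 0 < pstar * (1 - x) - 4 * x * (1 - pstar) := by nlinarith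
  have hps : psi lam c pstar x
      = c / lam * ((pstar * (1 - x) - 4 * x * (1 - pstar)) / (pstar * x * (1 - x) ^ 3)) := by
    unfold psi; field_simp; ring
  rw [hps]
  positivity

lemma phi_xi_eq_zero {lam c v pstar : ℝ} (hlam : 0 < lam)
    (h1 : 8/9 < pstar) (h2 : pstar < 1) :
    phi lam c v pstar (xi1 pstar) = 0 := by
  obtain ⟨hξ0, hξ1, hξq, hξρ⟩ := xi1_facts h1 h2
  set ξ := xi1 pstar with hξ
  have h1ξ : (0:ℝ) < 1 - ξ := by linarith
  have hp0 : (0:ℝ) < pstar := by linarith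
  have hlog1 : ξ / (1 - ξ) * ((1 - ξ) / ξ) = 1 := by field_simp
  unfold phi VS
  rw [← hξ, hlog1, Real.log_one]
  field_simp
  linear_combination (-c) * hξq

lemma G_xi_eq_zero {lam c v pstar : ℝ}
    (h1 : 8/9 < pstar) (h2 : pstar < 1) :
    VRS lam c v pstar (xi1 pstar) - VS lam c v pstar (xi1 pstar) = 0 := by
  obtain ⟨hξ0, hξ1, hξq, hξρ⟩ := xi1_facts h1 h2
  set ξ := xi1 pstar with hξ
  have h1ξ : (0:ℝ) < 1 - ξ := by linarith
  have hlog1 : ξ / (1 - ξ) * ((1 - ξ) / ξ) = 1 := by field_simp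
  unfold VRS Cplus
  rw [← hξ, hlog1, Real.log_one, div_self hξ0.ne']
  ring


/-- Lemma B.5, part (b), first claim: `V_RS(p) > V_S(p)` for all `p ∈ (0, ξ1)`. -/
theorem lemma_B5_b_first
    (lam c v pstar : ℝ) (hlam : 0 < lam) (hc : 0 < c) (hv : 0 < v)
    (hpstar : pstar ∈ Set.Ioo (8 / 9 : ℝ) 1) :
    ∀ p ∈ Set.Ioo (0 : ℝ) (xi1 pstar),
      VRS lam c v pstar p > VS lam c v pstar p := by
  obtain ⟨h1, h2⟩ := hpstar
  obtain ⟨hξ0, hξ1, hξq, hξρ⟩ := xi1_facts h1 h2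
  have hp0 : (0:ℝ) < pstar := by linarith
  rintro p ⟨hp0', hpξ⟩
  -- phi is strictly monotone on Ioc 0 ξ
  have hφmono : StrictMonoOn (phi lam c v pstar) (Set.Ioc 0 (xi1 pstar)) := by
    apply strictMonoOn_of_deriv_pos (convex_Ioc _ _)
    · intro x hx
      exact (hasDerivAt_phi hlam hp0 hξ0 hξ1 hx.1 (hx.2.trans_lt hξ1)).continuousAt.continuousWithinAt
    · intro x hx
      rw [interior_Ioc] at hx
      rw [(hasDerivAt_phi hlam hp0 hξ0 hξ1 hx.1 (hx.2.trans hξ1)).deriv]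
      exact psi_pos hlam hc h1 h2 hx.1 hx.2
  have hφneg : ∀ x ∈ Set.Ioo (0:ℝ) (xi1 pstar), phi lam c v pstar x < 0 := by
    intro x hx
    have := hφmono ⟨hx.1, hx.2.le⟩ ⟨hξ0, le_refl _⟩ hx.2
    rwa [phi_xi_eq_zero hlam h1 h2] at this
  have hGanti : StrictAntiOn (fun y => VRS lam c v pstar y - VS lam c v pstar y)
      (Set.Ioc 0 (xi1 pstar)) := by
    apply strictAntiOn_of_deriv_neg (convex_Ioc _ _)
    · intro x hx
      exact (hasDerivAt_G hlam hp0 h2 hξ0 hξ1 hx.1 (hx.2.trans_lt hξ1)).continuousAt.continuousWithinAt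
    · intro x hx
      rw [interior_Ioc] at hx
      rw [(hasDerivAt_G hlam hp0 h2 hξ0 hξ1 hx.1 (hx.2.trans hξ1)).deriv]
      exact hφneg x hx
  have h := hGanti ⟨hp0', hpξ.le⟩ ⟨hξ0, le_refl _⟩ hpξ
  simp only at h
  rw [G_xi_eq_zero h1 h2] at h
  linarith
end

section
/- (Lemma B.5, part b, second claim) Suppose p* ∈ (8/9, 1). Define V_LS(p) := ((p−ξ1)/(p*−ξ1))·v + ((p*−p)/(p*−ξ1))·V_S(ξ1) − C_−(p; ξ1). Then V_LS(p) > V_S(p) for every p ∈ (ξ1, ξ2). -/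
set_option maxHeartbeats 1000000


/-- The cost term `C_−(p;q)` of the L-drifting strategy with stopping bound `q`. -/
noncomputable def Cminus (lam c pstar p q : ℝ) : ℝ :=
  -(c / lam) * ((pstar - p) / (pstar * (1 - pstar))) *
    (pstar * Real.log ((1 - q) / (1 - p)) + (1 - pstar) * Real.log (q / p)
      - Real.log ((pstar - q) / (pstar - p)))

/-- The value of L-drifting until `ξ1` followed by the stationary strategy. -/
noncomputable def VLS (lam c v pstar p : ℝ) : ℝ :=
  (p - xi1 pstar) / (pstar - xi1 pstar) * v
    + (pstar - p) / (pstar - xi1 pstar) * VS lam c v pstar (xi1 pstar)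
    - Cminus lam c pstar p (xi1 pstar)

/-- Lemma B.5, part (b), second claim: `V_LS(p) > V_S(p)` for all `p ∈ (ξ1, ξ2)`. -/
theorem lemma_B5_b_second
    (lam c v pstar : ℝ) (hlam : 0 < lam) (hc : 0 < c) (hv : 0 < v)
    (hpstar : pstar ∈ Set.Ioo (8 / 9 : ℝ) 1) :
    ∀ p ∈ Set.Ioo (xi1 pstar) (xi2 pstar),
      VLS lam c v pstar p > VS lam c v pstar p := by
  obtain ⟨hs1, hs2⟩ := hpstar
  set s := pstar with hs_def
  have hs0 : (0:ℝ) < s := lt_trans (by norm_num) hs1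
  set disc : ℝ := (3 * s / 4) ^ 2 - s / 2 with hdisc_def
  have hdisc : 0 < disc := by
    have : disc = s * (9 * s - 8) / 16 := by ring
    rw [this]
    have : (0:ℝ) < 9 * s - 8 := by nlinarith
    positivity
  set d : ℝ := Real.sqrt disc with hd_def
  have hd_pos : 0 < d := Real.sqrt_pos.mpr hdisc
  have hd2 : d ^ 2 = disc := Real.sq_sqrt hdisc.le
  have hd_lt : d < 3 * s / 4 := by
    have h1 : disc < (3 * s / 4) ^ 2 := by nlinarith
    calc d < Real.sqrt ((3 * s / 4) ^ 2) := Real.sqrt_lt_sqrt hdisc.le h1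
    _ = 3 * s / 4 := Real.sqrt_sq (by positivity)
  have hd_lt' : d < s / 4 := by
    have h1 : disc < (s / 4) ^ 2 := by nlinarith
    calc d < Real.sqrt ((s / 4) ^ 2) := Real.sqrt_lt_sqrt hdisc.le h1
    _ = s / 4 := Real.sqrt_sq (by positivity)
  have hq_eq : xi1 s = 3 * s / 4 - d := rfl
  have hr_eq : xi2 s = 3 * s / 4 + d := rfl
  set q : ℝ := xi1 s with hq_def
  set r : ℝ := xi2 s with hr_def
  have hq_pos : 0 < q := by rw [hq_eq]; linarith
  have hq_lt_r : q < r := by rw [hq_eq, hr_eq]; linarith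
  have hr_lt_s : r < s := by rw [hr_eq]; linarith
  have hq_lt_s : q < s := lt_trans hq_lt_r hr_lt_s
  have hs_lt_1 : s < 1 := hs2
  have hq_lt_1 : q < 1 := lt_trans hq_lt_s hs_lt_1
  have hqr_sum : q + r = 3 * s / 2 := by rw [hq_eq, hr_eq]; ring
  have hqr_prod : q * r = s / 2 := by
    rw [hq_eq, hr_eq]
    have : (3 * s / 4 - d) * (3 * s / 4 + d) = (3 * s / 4) ^ 2 - d ^ 2 := by ring
    rw [this, hd2]; ring
  -- the auxiliary function F
  set F : ℝ → ℝ := fun x =>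
    2 * (1 - s) * ((1 - x)⁻¹ - (1 - q)⁻¹)
      + s * (Real.log (1 - q) - Real.log (1 - x))
      + (1 - s) * (Real.log q - Real.log x)
      - (Real.log (s - q) - Real.log (s - x)) with hF_def
  set F' : ℝ → ℝ := fun x =>
    2 * (1 - s) / (1 - x) ^ 2 + s / (1 - x) - (1 - s) / x - 1 / (s - x) with hF'_def
  have hderiv : ∀ x ∈ Set.Ioo (0:ℝ) s, HasDerivAt F (F' x) x := by
    intro x hx
    obtain ⟨hx0, hxs⟩ := hx
    have hx1 : x < 1 := lt_trans hxs hs_lt_1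
    have h1x : (1:ℝ) - x ≠ 0 := by linarith
    have hsx : s - x ≠ 0 := by linarith
    have hx0' : x ≠ 0 := ne_of_gt hx0
    have h₁ : HasDerivAt (fun y : ℝ => (1 - y)) (-1) x := by
      simpa using (hasDerivAt_id x).const_sub 1
    have h₂ : HasDerivAt (fun y : ℝ => (1 - y)⁻¹) (-(-1) / (1 - x) ^ 2) x := h₁.inv h1x
    have h₃ : HasDerivAt (fun y : ℝ => Real.log (1 - y)) (-1 / (1 - x)) x := h₁.log h1x
    have h₄ : HasDerivAt (fun y : ℝ => Real.log y) x⁻¹ x := Real.hasDerivAt_log hx0'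
    have h₅ : HasDerivAt (fun y : ℝ => (s - y)) (-1) x := by
      simpa using (hasDerivAt_id x).const_sub s
    have h₆ : HasDerivAt (fun y : ℝ => Real.log (s - y)) (-1 / (s - x)) x := h₅.log hsx
    have := ((((h₂.sub_const ((1 - q)⁻¹)).const_mul (2 * (1 - s))).add
        ((h₃.const_sub (Real.log (1 - q))).const_mul s)).add
        ((h₄.const_sub (Real.log q)).const_mul (1 - s))).sub
        (h₆.const_sub (Real.log (s - q)))
    convert this using 1
    · rfl
    · rfl
    · rfl
    rw [hF'_def]
    field_simp
    ring
  have hIccsub : Set.Icc q r ⊆ Set.Ioo (0:ℝ) s := by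
    intro x hx
    exact ⟨lt_of_lt_of_le hq_pos hx.1, lt_of_le_of_lt hx.2 hr_lt_s⟩
  have hcont : ContinuousOn F (Set.Icc q r) := fun x hx =>
    ((hderiv x (hIccsub hx)).differentiableAt.continuousAt).continuousWithinAt
  have hmono : StrictMonoOn F (Set.Icc q r) := by
    apply strictMonoOn_of_deriv_pos (convex_Icc q r) hcont
    intro x hx
    rw [interior_Icc] at hx
    obtain ⟨hqx, hxr⟩ := hx
    have hx0 : 0 < x := lt_trans hq_pos hqx
    have hxs : x < s := lt_trans hxr hr_lt_s
    have hx1 : x < 1 := lt_trans hxs hs_lt_1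
    rw [(hderiv x ⟨hx0, hxs⟩).deriv]
    have hnum : 3 * x * s - s - 2 * x ^ 2 = 2 * (x - q) * (r - x) := by
      linear_combination (-2 * x) * hqr_sum + 2 * hqr_prod
    have key : F' x = (1 - s) * (2 * (x - q) * (r - x)) / (x * (1 - x) ^ 2 * (s - x)) := by
      rw [hF'_def, ← hnum]
      have h1x : (1:ℝ) - x ≠ 0 := by linarith
      have hsx : s - x ≠ 0 := by linarith
      have hx0' : x ≠ 0 := ne_of_gt hx0
      field_simp
      ring
    rw [key]
    have h1 : (0:ℝ) < 1 - s := by linarith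
    have h2 : (0:ℝ) < x - q := by linarith
    have h3 : (0:ℝ) < r - x := by linarith
    have h4 : (0:ℝ) < 1 - x := by linarith
    have h5 : (0:ℝ) < s - x := by linarith
    positivity
  have hFq : F q = 0 := by rw [hF_def]; ring
  intro p hp
  obtain ⟨hp1, hp2⟩ := hp
  have hp_mem : p ∈ Set.Icc q r := ⟨le_of_lt hp1, le_of_lt hp2⟩
  have hq_mem : q ∈ Set.Icc q r := ⟨le_refl q, le_of_lt hq_lt_r⟩
  have hFp : 0 < F p := by
    have := hmono hq_mem hp_mem hp1
    rw [hFq] at this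
    exact this
  -- positivity facts for the algebraic identity
  have hp_pos : 0 < p := lt_trans hq_pos hp1
  have hp_lt_s : p < s := lt_trans hp2 hr_lt_s
  have hp_lt_1 : p < 1 := lt_trans hp_lt_s hs_lt_1
  have h1p : (0:ℝ) < 1 - p := by linarith
  have h1q : (0:ℝ) < 1 - q := by linarith
  have h1s : (0:ℝ) < 1 - s := by linarith
  have hsp : (0:ℝ) < s - p := by linarith
  have hsq : (0:ℝ) < s - q := by linarith
  have key : VLS lam c v s p - VS lam c v s p = c * (s - p) / (lam * s * (1 - s)) * F p := by
    rw [VLS, VS, Cminus, VS, hF_def]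
    rw [show xi1 s = q from rfl]
    rw [Real.log_div (ne_of_gt h1q) (ne_of_gt h1p),
        Real.log_div (ne_of_gt hq_pos) (ne_of_gt hp_pos),
        Real.log_div (ne_of_gt hsq) (ne_of_gt hsp)]
    have hlam' : lam ≠ 0 := ne_of_gt hlam
    have hs0' : s ≠ 0 := ne_of_gt hs0
    field_simp
    ring
  have hK : 0 < c * (s - p) / (lam * s * (1 - s)) := by positivity
  have : 0 < VLS lam c v s p - VS lam c v s p := by
    rw [key]; exact mul_pos hK hFp
  linarith
end

section
/- (Lemma B.6) The function U_R is differentiable at p* with U_R′(p*) = U_r′(p*) − (u_ℓ^L − u_r^L)/p* + c/(λ p* (1−p*)), where U_r′(p*) = u_r^R − u_r^L. Consequently, U_R′(p*) is less than, equal to, or greater than U_r′(p*) according as p* is less than, equal to, or greater than p̄ := 1 − c/(λ(u_ℓ^L − u_r^L)). -/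
/-- Lemma B.6: the receiver's value `U_R` of the R-drifting strategy is differentiable at `p*`
with `U_R′(p*) = U_r′(p*) − (u_ℓ^L − u_r^L)/p* + c/(λ p* (1−p*))`, so that
`U_R′(p*) ⋚ U_r′(p*)` according as `p* ⋚ p̄ := 1 − c/(λ(u_ℓ^L − u_r^L))`. -/
theorem lemma_B6
    (lam c ulL ulR urL urR : ℝ) (hlam : 0 < lam) (hc : 0 < c)
    (hul : ulL > max urL 0) (hur : urR > max ulR 0)
    (pstar : ℝ) (hpstar : pstar ∈ Set.Ioo (0 : ℝ) 1) :
    HasDerivAt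
      (fun p => (pstar - p) / pstar * ulL
        + p / pstar * (pstar * urR + (1 - pstar) * urL) - Cplus lam c p pstar)
      ((urR - urL) - (ulL - urL) / pstar + c / (lam * pstar * (1 - pstar))) pstar
    ∧ ((urR - urL) - (ulL - urL) / pstar + c / (lam * pstar * (1 - pstar)) < urR - urL
        ↔ pstar < 1 - c / (lam * (ulL - urL)))
    ∧ ((urR - urL) - (ulL - urL) / pstar + c / (lam * pstar * (1 - pstar)) = urR - urL
        ↔ pstar = 1 - c / (lam * (ulL - urL)))
    ∧ ((urR - urL) - (ulL - urL) / pstar + c / (lam * pstar * (1 - pstar)) > urR - urL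
        ↔ pstar > 1 - c / (lam * (ulL - urL))) := by
  obtain ⟨hq0, hq1⟩ := hpstar
  have h1q : (0:ℝ) < 1 - pstar := by linarith
  have hq0' : pstar ≠ 0 := ne_of_gt hq0
  have h1q' : (1 - pstar) ≠ 0 := ne_of_gt h1q
  have hlam' : lam ≠ 0 := ne_of_gt hlam
  have hA : 0 < ulL - urL := by
    have := le_max_left urL 0
    have := le_max_right urL (0:ℝ)
    linarith [lt_of_le_of_lt (le_max_left urL 0) hul]
  refine ⟨?_, ?_, ?_, ?_⟩
  · -- derivative computation
    have hdiv : HasDerivAt (fun p : ℝ => (1 - p) / p)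
        (((0 - 1) * pstar - (1 - pstar) * 1) / pstar ^ 2) pstar :=
      ((hasDerivAt_const pstar (1:ℝ)).sub (hasDerivAt_id pstar)).div (hasDerivAt_id pstar) hq0'
    have hg : HasDerivAt (fun p : ℝ => pstar / (1 - pstar) * ((1 - p) / p))
        (pstar / (1 - pstar) * (((0 - 1) * pstar - (1 - pstar) * 1) / pstar ^ 2)) pstar :=
      hdiv.const_mul _
    have hgval : pstar / (1 - pstar) * ((1 - pstar) / pstar) = 1 := by field_simp
    have hlog : HasDerivAt (fun p : ℝ => Real.log (pstar / (1 - pstar) * ((1 - p) / p)))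
        ((pstar / (1 - pstar) * (((0 - 1) * pstar - (1 - pstar) * 1) / pstar ^ 2)) /
          (pstar / (1 - pstar) * ((1 - pstar) / pstar))) pstar := by
      apply hg.log
      rw [hgval]; norm_num
    have hmul : HasDerivAt
        (fun p : ℝ => p * Real.log (pstar / (1 - pstar) * ((1 - p) / p)))
        (1 * Real.log (pstar / (1 - pstar) * ((1 - pstar) / pstar)) +
          pstar * ((pstar / (1 - pstar) * (((0 - 1) * pstar - (1 - pstar) * 1) / pstar ^ 2)) /
            (pstar / (1 - pstar) * ((1 - pstar) / pstar)))) pstar :=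
      (hasDerivAt_id pstar).mul hlog
    have hC : HasDerivAt (fun p => Cplus lam c p pstar)
        (c / lam * ((1 * Real.log (pstar / (1 - pstar) * ((1 - pstar) / pstar)) +
          pstar * ((pstar / (1 - pstar) * (((0 - 1) * pstar - (1 - pstar) * 1) / pstar ^ 2)) /
            (pstar / (1 - pstar) * ((1 - pstar) / pstar)))) - 1 / pstar)) pstar := by
      unfold Cplus
      exact (((hmul.add_const 1).sub ((hasDerivAt_id pstar).div_const pstar)).const_mul _).congr_deriv
        rfl
    have hlin : HasDerivAt
        (fun p : ℝ => (pstar - p) / pstar * ulL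
          + p / pstar * (pstar * urR + (1 - pstar) * urL))
        ((0 - 1) / pstar * ulL + 1 / pstar * (pstar * urR + (1 - pstar) * urL)) pstar := by
      have h1 : HasDerivAt (fun p : ℝ => (pstar - p) / pstar * ulL) ((0 - 1) / pstar * ulL) pstar :=
        ((((hasDerivAt_const pstar pstar).sub (hasDerivAt_id pstar)).div_const pstar).mul_const ulL)
      have h2 : HasDerivAt (fun p : ℝ => p / pstar * (pstar * urR + (1 - pstar) * urL))
          (1 / pstar * (pstar * urR + (1 - pstar) * urL)) pstar :=
        (((hasDerivAt_id pstar).div_const pstar).mul_const _)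
      exact h1.add h2
    have := hlin.sub hC
    refine this.congr_deriv ?_
    rw [hgval, Real.log_one]
    field_simp
    ring
  · have key : (urR - urL) - (ulL - urL) / pstar + c / (lam * pstar * (1 - pstar))
        = (urR - urL) + (ulL - urL) / (pstar * (1 - pstar)) *
            (pstar - (1 - c / (lam * (ulL - urL)))) := by
      field_simp
      ring
    have hM : 0 < (ulL - urL) / (pstar * (1 - pstar)) := by positivity
    rw [key]
    constructor
    · intro h
      nlinarith
    · intro h
      nlinarith
  · have key : (urR - urL) - (ulL - urL) / pstar + c / (lam * pstar * (1 - pstar))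
        = (urR - urL) + (ulL - urL) / (pstar * (1 - pstar)) *
            (pstar - (1 - c / (lam * (ulL - urL)))) := by
      field_simp
      ring
    have hM : 0 < (ulL - urL) / (pstar * (1 - pstar)) := by positivity
    rw [key]
    constructor
    · intro h
      have h2 : (ulL - urL) / (pstar * (1 - pstar)) *
          (pstar - (1 - c / (lam * (ulL - urL)))) = 0 := by linarith
      rcases mul_eq_zero.mp h2 with h3 | h3
      · exact absurd h3 (ne_of_gt hM)
      · linarith
    · intro h
      rw [h]; ring
  · have key : (urR - urL) - (ulL - urL) / pstar + c / (lam * pstar * (1 - pstar))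
        = (urR - urL) + (ulL - urL) / (pstar * (1 - pstar)) *
            (pstar - (1 - c / (lam * (ulL - urL)))) := by
      field_simp
      ring
    have hM : 0 < (ulL - urL) / (pstar * (1 - pstar)) := by positivity
    rw [key]
    constructor
    · intro h
      nlinarith
    · intro h
      nlinarith
end

section
/- (Existence, uniqueness and closed form of the cutoff π_ℓL) Let λ > 0, c > 0, v > 0 and p* ∈ (0,1). The equation λ·v·x² − (λ·v + c)·x + p*·c = 0 (equivalently, c·(p* − x) = λ·x·(1−x)·v) has exactly one solution x in the interval (0, p*), and this solution equals 1/2 + c/(2λv) − √( (1/2 + c/(2λv))² − c·p*/(λv) ). -/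
/-- Existence, uniqueness and closed form of the cutoff `π_ℓL`: the equation
`λ v x² − (λ v + c) x + p* c = 0` has exactly one solution in `(0, p*)`, given by
`1/2 + c/(2λv) − √((1/2 + c/(2λv))² − c p*/(λv))`. -/
theorem cutoff_pi_ellL
    (lam c v pstar : ℝ) (hlam : 0 < lam) (hc : 0 < c) (hv : 0 < v)
    (hpstar : pstar ∈ Set.Ioo (0 : ℝ) 1) :
    (1 / 2 + c / (2 * lam * v)
        - Real.sqrt ((1 / 2 + c / (2 * lam * v)) ^ 2 - c * pstar / (lam * v)))
      ∈ Set.Ioo (0 : ℝ) pstar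
    ∧ lam * v * (1 / 2 + c / (2 * lam * v)
          - Real.sqrt ((1 / 2 + c / (2 * lam * v)) ^ 2 - c * pstar / (lam * v))) ^ 2
        - (lam * v + c) * (1 / 2 + c / (2 * lam * v)
          - Real.sqrt ((1 / 2 + c / (2 * lam * v)) ^ 2 - c * pstar / (lam * v)))
        + pstar * c = 0
    ∧ ∀ x ∈ Set.Ioo (0 : ℝ) pstar,
        lam * v * x ^ 2 - (lam * v + c) * x + pstar * c = 0 →
          x = 1 / 2 + c / (2 * lam * v)
            - Real.sqrt ((1 / 2 + c / (2 * lam * v)) ^ 2 - c * pstar / (lam * v)) := by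
  obtain ⟨hp0, hp1⟩ := hpstar
  set A : ℝ := lam * v with hA
  have hA0 : 0 < A := mul_pos hlam hv
  set b : ℝ := 1 / 2 + c / (2 * lam * v) with hb
  set D : ℝ := b ^ 2 - c * pstar / (lam * v) with hD
  have hb0 : 0 < b := by
    have : 0 < c / (2 * lam * v) := by positivity
    simp [hb]; linarith
  have h2b : 2 * A * b = A + c := by
    rw [hb, hA]
    field_simp
  -- D > 0
  have hDpos : 0 < D := by
    have hDA : D * (4 * A ^ 2) = (A + c) ^ 2 - 4 * A * c * pstar := by
      have : c * pstar / (lam * v) * (4 * A ^ 2) = 4 * A * c * pstar := by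
        field_simp [hA]; ring
      linear_combination (4 * A ^ 2) * hD + (2 * A * b + A + c) * h2b - this
    nlinarith [sq_nonneg (A - c), mul_pos (mul_pos hA0 hc) (sub_pos.mpr hp1)]
  set s : ℝ := Real.sqrt D with hs
  have hs0 : 0 ≤ s := Real.sqrt_nonneg D
  have hs2 : s ^ 2 = D := Real.sq_sqrt hDpos.le
  have hspos : 0 < s := Real.sqrt_pos.mpr hDpos
  have hDmul : A * s ^ 2 = A * b ^ 2 - c * pstar := by
    rw [hs2, hD]
    field_simp [hA]
    ring
  -- s < b
  have hsb : s < b := by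
    have hcpA : 0 < c * pstar / (lam * v) := by positivity
    have : s ^ 2 < b ^ 2 := by rw [hs2, hD]; linarith
    nlinarith
  -- |b - pstar| < s
  have h1 : A * s ^ 2 - A * (b - pstar) ^ 2 = A * (pstar * (1 - pstar)) := by
    linear_combination hDmul + pstar * h2b
  have hkey : (b - pstar) ^ 2 < s ^ 2 := by
    nlinarith [h1, hA0, mul_pos hp0 (sub_pos.mpr hp1)]
  have hsbp : b - pstar < s := by nlinarith
  have hps : pstar < b + s := by nlinarith
  refine ⟨⟨by linarith, by linarith⟩, ?_, ?_⟩
  · show A * (b - s) ^ 2 - (A + c) * (b - s) + pstar * c = 0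
    linear_combination hDmul + (b - s) * h2b
  · intro x hx heq
    obtain ⟨hx0, hxp⟩ := hx
    show x = b - s
    have hfac : A * (x - (b - s)) * (x - (b + s)) = 0 := by
      linear_combination heq - hDmul - x * h2b
    have hxne : x - (b + s) ≠ 0 := by
      intro h
      have : x = b + s := by linarith [sub_eq_zero.mp h]
      linarith
    have := mul_eq_zero.mp hfac
    rcases this with h | h
    · rcases mul_eq_zero.mp h with h' | h'
      · exact absurd h' (ne_of_gt hA0)
      · linarith [sub_eq_zero.mp h']
    · exact absurd h hxne
end

section
/- (Strict convexity of L-drifting value functions, equation (27)) Fix λ > 0, c > 0, p* ∈ (0,1) and q ∈ (0, p*). The function p ↦ C_−(p; q) is twice differentiable on (0, p*) with second derivative equal to −( (p*−p)² + p*(1−p*) )·c / ( λ · p² · (1−p)² · (p*−p) ) at every p ∈ (0, p*); in particular this second derivative is strictly negative, so for any reals X and v the function p ↦ ((p−q)/(p*−q))·v + ((p*−p)/(p*−q))·X − C_−(p; q) is strictly convex on (0, p*). -/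
noncomputable def Afun (pstar q p : ℝ) : ℝ :=
  pstar * Real.log ((1 - q) / (1 - p)) + (1 - pstar) * Real.log (q / p)
    - Real.log ((pstar - q) / (pstar - p))

noncomputable def A1fun (pstar p : ℝ) : ℝ :=
  pstar / (1 - p) - (1 - pstar) / p - 1 / (pstar - p)

noncomputable def g1fun (lam c pstar q p : ℝ) : ℝ :=
  -(c / lam) / (pstar * (1 - pstar)) * (-(Afun pstar q p) + (pstar - p) * A1fun pstar p)

lemma hasDerivAt_Afun {pstar q p : ℝ} (hpstar1 : pstar < 1) (hq0 : 0 < q) (hq1 : q < pstar)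
    (hp0 : 0 < p) (hpp : p < pstar) :
    HasDerivAt (Afun pstar q) (A1fun pstar p) p := by
  have h1p : (0:ℝ) < 1 - p := by linarith
  have h1q : (0:ℝ) < 1 - q := by linarith
  have hsp : (0:ℝ) < pstar - p := by linarith
  have hsq : (0:ℝ) < pstar - q := by linarith
  have h₁ : HasDerivAt (fun x : ℝ => (1 - q) / (1 - x))
      ((0 * (1 - p) - (1 - q) * (0 - 1)) / (1 - p) ^ 2) p :=
    (hasDerivAt_const p (1 - q)).div ((hasDerivAt_const p 1).sub (hasDerivAt_id p)) h1p.ne'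
  have h₂ : HasDerivAt (fun x : ℝ => q / x) ((0 * p - q * 1) / p ^ 2) p :=
    (hasDerivAt_const p q).div (hasDerivAt_id p) hp0.ne'
  have h₃ : HasDerivAt (fun x : ℝ => (pstar - q) / (pstar - x))
      ((0 * (pstar - p) - (pstar - q) * (0 - 1)) / (pstar - p) ^ 2) p :=
    (hasDerivAt_const p (pstar - q)).div
      ((hasDerivAt_const p pstar).sub (hasDerivAt_id p)) hsp.ne'
  have l₁ := (h₁.log (by positivity)).const_mul pstar
  have l₂ := (h₂.log (by positivity)).const_mul (1 - pstar)
  have l₃ := h₃.log (by positivity)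
  have := (l₁.add l₂).sub l₃
  refine this.congr_deriv ?_
  unfold A1fun
  field_simp
  ring

lemma hasDerivAt_Cminus {lam c pstar q p : ℝ} (hpstar1 : pstar < 1) (hq0 : 0 < q)
    (hq1 : q < pstar) (hp0 : 0 < p) (hpp : p < pstar) :
    HasDerivAt (fun x => Cminus lam c pstar x q) (g1fun lam c pstar q p) p := by
  have hA := hasDerivAt_Afun hpstar1 hq0 hq1 hp0 hpp
  have hu : HasDerivAt (fun x : ℝ => -(c / lam) * ((pstar - x) / (pstar * (1 - pstar))))
      (-(c / lam) * ((0 - 1) / (pstar * (1 - pstar)))) p :=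
    (((hasDerivAt_const p pstar).sub (hasDerivAt_id p)).div_const _).const_mul _
  have := hu.mul hA
  refine this.congr_deriv ?_
  unfold g1fun Afun
  ring

lemma hasDerivAt_g1fun {lam c pstar q p : ℝ} (hlam : 0 < lam) (hpstar0 : 0 < pstar)
    (hpstar1 : pstar < 1) (hq0 : 0 < q) (hq1 : q < pstar) (hp0 : 0 < p) (hpp : p < pstar) :
    HasDerivAt (g1fun lam c pstar q)
      (-((pstar - p) ^ 2 + pstar * (1 - pstar)) * c
        / (lam * p ^ 2 * (1 - p) ^ 2 * (pstar - p))) p := by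
  have h1p : (0:ℝ) < 1 - p := by linarith
  have hsp : (0:ℝ) < pstar - p := by linarith
  have h1s : (0:ℝ) < 1 - pstar := by linarith
  have hA := hasDerivAt_Afun hpstar1 hq0 hq1 hp0 hpp
  have hA1 : HasDerivAt (A1fun pstar)
      (pstar / (1 - p) ^ 2 + (1 - pstar) / p ^ 2 - 1 / (pstar - p) ^ 2) p := by
    have h₁ : HasDerivAt (fun x : ℝ => pstar / (1 - x))
        ((0 * (1 - p) - pstar * (0 - 1)) / (1 - p) ^ 2) p :=
      (hasDerivAt_const p pstar).div ((hasDerivAt_const p 1).sub (hasDerivAt_id p)) h1p.ne'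
    have h₂ : HasDerivAt (fun x : ℝ => (1 - pstar) / x) ((0 * p - (1 - pstar) * 1) / p ^ 2) p :=
      (hasDerivAt_const p (1 - pstar)).div (hasDerivAt_id p) hp0.ne'
    have h₃ : HasDerivAt (fun x : ℝ => 1 / (pstar - x))
        ((0 * (pstar - p) - 1 * (0 - 1)) / (pstar - p) ^ 2) p :=
      (hasDerivAt_const p 1).div ((hasDerivAt_const p pstar).sub (hasDerivAt_id p)) hsp.ne'
    have := (h₁.sub h₂).sub h₃
    refine this.congr_deriv ?_
    field_simp
    ring
  have hmul : HasDerivAt (fun x => (pstar - x) * A1fun pstar x)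
      ((0 - 1) * A1fun pstar p + (pstar - p) *
        (pstar / (1 - p) ^ 2 + (1 - pstar) / p ^ 2 - 1 / (pstar - p) ^ 2)) p :=
    ((hasDerivAt_const p pstar).sub (hasDerivAt_id p)).mul hA1
  have := ((hA.neg.add hmul).const_mul (-(c / lam) / (pstar * (1 - pstar))))
  refine this.congr_deriv ?_
  unfold A1fun
  field_simp
  ring

/-- Strict convexity of L-drifting value functions (equation (27)): `p ↦ C_−(p;q)` is twice
differentiable on `(0, p*)` with second derivative
`−((p*−p)² + p*(1−p*))·c/(λ p² (1−p)² (p*−p)) < 0`, so for any `X`, `v` the function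
`p ↦ ((p−q)/(p*−q))·v + ((p*−p)/(p*−q))·X − C_−(p;q)` is strictly convex on `(0, p*)`. -/
theorem L_drifting_strictly_convex
    (lam c pstar : ℝ) (hlam : 0 < lam) (hc : 0 < c)
    (hpstar : pstar ∈ Set.Ioo (0 : ℝ) 1)
    (q : ℝ) (hq : q ∈ Set.Ioo (0 : ℝ) pstar) :
    (∀ p ∈ Set.Ioo (0 : ℝ) pstar, DifferentiableAt ℝ (fun x => Cminus lam c pstar x q) p)
    ∧ (∀ p ∈ Set.Ioo (0 : ℝ) pstar,
        HasDerivAt (deriv (fun x => Cminus lam c pstar x q))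
          (-((pstar - p) ^ 2 + pstar * (1 - pstar)) * c
            / (lam * p ^ 2 * (1 - p) ^ 2 * (pstar - p))) p)
    ∧ (∀ p ∈ Set.Ioo (0 : ℝ) pstar,
        -((pstar - p) ^ 2 + pstar * (1 - pstar)) * c
          / (lam * p ^ 2 * (1 - p) ^ 2 * (pstar - p)) < 0)
    ∧ ∀ X v : ℝ, StrictConvexOn ℝ (Set.Ioo (0 : ℝ) pstar)
        (fun p => (p - q) / (pstar - q) * v + (pstar - p) / (pstar - q) * X
          - Cminus lam c pstar p q) := by
  obtain ⟨hps0, hps1⟩ := hpstar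
  obtain ⟨hq0, hq1⟩ := hq
  have hCd : ∀ p ∈ Set.Ioo (0 : ℝ) pstar,
      HasDerivAt (fun x => Cminus lam c pstar x q) (g1fun lam c pstar q p) p :=
    fun p hp => hasDerivAt_Cminus hps1 hq0 hq1 hp.1 hp.2
  have hderiv_eq : Set.EqOn (deriv (fun x => Cminus lam c pstar x q)) (g1fun lam c pstar q)
      (Set.Ioo (0 : ℝ) pstar) := fun p hp => (hCd p hp).deriv
  have hopen : IsOpen (Set.Ioo (0 : ℝ) pstar) := isOpen_Ioo
  have hC2 : ∀ p ∈ Set.Ioo (0 : ℝ) pstar,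
      HasDerivAt (deriv (fun x => Cminus lam c pstar x q))
        (-((pstar - p) ^ 2 + pstar * (1 - pstar)) * c
          / (lam * p ^ 2 * (1 - p) ^ 2 * (pstar - p))) p := by
    intro p hp
    have hg := hasDerivAt_g1fun (c := c) hlam hps0 hps1 hq0 hq1 hp.1 hp.2
    exact hg.congr_of_eventuallyEq <|
      Filter.eventuallyEq_of_mem (hopen.mem_nhds hp) fun x hx => hderiv_eq hx
  have hneg : ∀ p ∈ Set.Ioo (0 : ℝ) pstar,
      -((pstar - p) ^ 2 + pstar * (1 - pstar)) * c
        / (lam * p ^ 2 * (1 - p) ^ 2 * (pstar - p)) < 0 := by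
    intro p hp
    obtain ⟨hp0, hpp⟩ := hp
    have h1p : (0:ℝ) < 1 - p := by linarith
    have hsp : (0:ℝ) < pstar - p := by linarith
    have h1s : (0:ℝ) < 1 - pstar := by linarith
    apply div_neg_of_neg_of_pos
    · nlinarith [sq_nonneg (pstar - p), mul_pos (mul_pos hps0 h1s) hc, mul_nonneg (sq_nonneg (pstar - p)) hc.le]
    · positivity
  refine ⟨fun p hp => (hCd p hp).differentiableAt, hC2, hneg, ?_⟩
  intro X v
  set F := fun p => (p - q) / (pstar - q) * v + (pstar - p) / (pstar - q) * X
      - Cminus lam c pstar p q with hF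
  have hFd : ∀ p ∈ Set.Ioo (0 : ℝ) pstar,
      HasDerivAt F (1 / (pstar - q) * v + (0 - 1) / (pstar - q) * X - g1fun lam c pstar q p) p := by
    intro p hp
    have h1 : HasDerivAt (fun x : ℝ => (x - q) / (pstar - q) * v) (1 / (pstar - q) * v) p :=
      (((hasDerivAt_id p).sub_const q).div_const _).mul_const v
    have h2 : HasDerivAt (fun x : ℝ => (pstar - x) / (pstar - q) * X)
        ((0 - 1) / (pstar - q) * X) p :=
      ((((hasDerivAt_const p pstar).sub (hasDerivAt_id p)).div_const _)).mul_const X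
    exact (h1.add h2).sub (hCd p hp)
  have hFderiv_eq : Set.EqOn (deriv F)
      (fun p => 1 / (pstar - q) * v + (0 - 1) / (pstar - q) * X - g1fun lam c pstar q p)
      (Set.Ioo (0 : ℝ) pstar) := fun p hp => (hFd p hp).deriv
  apply strictConvexOn_of_deriv2_pos (convex_Ioo _ _)
  · exact fun p hp => ((hFd p hp).differentiableAt).continuousAt.continuousWithinAt
  · intro p hp
    rw [interior_Ioo] at hp
    have hF2 : HasDerivAt (deriv F)
        (0 - (-((pstar - p) ^ 2 + pstar * (1 - pstar)) * c
          / (lam * p ^ 2 * (1 - p) ^ 2 * (pstar - p)))) p := by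
      have hg := hasDerivAt_g1fun (c := c) hlam hps0 hps1 hq0 hq1 hp.1 hp.2
      have : HasDerivAt
          (fun x => 1 / (pstar - q) * v + (0 - 1) / (pstar - q) * X - g1fun lam c pstar q x)
          (0 - (-((pstar - p) ^ 2 + pstar * (1 - pstar)) * c
            / (lam * p ^ 2 * (1 - p) ^ 2 * (pstar - p)))) p :=
        (hasDerivAt_const p _).sub hg
      exact this.congr_of_eventuallyEq <|
        Filter.eventuallyEq_of_mem (hopen.mem_nhds hp) fun x hx => hFderiv_eq hx
    have : deriv (deriv F) p = _ := hF2.deriv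
    simp only [Function.iterate_succ, Function.iterate_zero, Function.comp_apply, id]
    rw [this]
    have := hneg p hp
    linarith
end

section
/- (Lemma B.6a restated without η) Suppose p̂ < p* ≤ p̄, where p̄ := 1 − c/(λ(u_ℓ^L − u_r^L)). Then the equation U_ℓ(φ) = U_R(φ) has exactly one solution φ in the interval (0, p*), and this solution satisfies φ < p̂. Moreover, U_R(p) < U_ℓ(p) for p ∈ (0, φ) and U_R(p) > U_ℓ(p) for p ∈ (φ, p*). -/
/-- The receiver's payoff from taking action `ℓ` at belief `p`. -/
noncomputable def Ul (ulL ulR p : ℝ) : ℝ := p * ulR + (1 - p) * ulL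

/-- The receiver's payoff from taking action `r` at belief `p`. -/
noncomputable def Ur (urL urR p : ℝ) : ℝ := p * urR + (1 - p) * urL

/-- The belief at which the receiver is indifferent between `ℓ` and `r`. -/
noncomputable def phat (ulL ulR urL urR : ℝ) : ℝ :=
  (ulL - urL) / (urR - ulR + ulL - urL)

/-- The receiver's value of the R-drifting strategy with stopping bound `p*`. -/
noncomputable def UR (lam c ulL urL urR pstar p : ℝ) : ℝ :=
  (pstar - p) / pstar * ulL + p / pstar * Ur urL urR pstar - Cplus lam c p pstar

set_option maxHeartbeats 1000000 in
/-- Lemma B.6a restated without `η`: if `p̂ < p* ≤ p̄`, then `U_ℓ = U_R` has a unique solution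
`φ` in `(0, p*)`, with `φ < p̂`, `U_R < U_ℓ` on `(0, φ)` and `U_R > U_ℓ` on `(φ, p*)`. -/
theorem lemma_B6a
    (lam c : ℝ) (ulL ulR urL urR : ℝ) (hlam : 0 < lam) (hc : 0 < c)
    (hul : ulL > max urL 0) (hur : urR > max ulR 0)
    (pstar : ℝ) (hpstar : pstar ∈ Set.Ioo (0 : ℝ) 1)
    (hlow : phat ulL ulR urL urR < pstar)
    (hhigh : pstar ≤ 1 - c / (lam * (ulL - urL))) :
    ∃ phi : ℝ, phi ∈ Set.Ioo (0 : ℝ) pstar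
      ∧ Ul ulL ulR phi = UR lam c ulL urL urR pstar phi
      ∧ phi < phat ulL ulR urL urR
      ∧ (∀ p ∈ Set.Ioo (0 : ℝ) pstar,
          Ul ulL ulR p = UR lam c ulL urL urR pstar p → p = phi)
      ∧ (∀ p ∈ Set.Ioo (0 : ℝ) phi, UR lam c ulL urL urR pstar p < Ul ulL ulR p)
      ∧ (∀ p ∈ Set.Ioo phi pstar, Ul ulL ulR p < UR lam c ulL urL urR pstar p) := by
  obtain ⟨hq0, hq1⟩ := hpstar
  have hlamne : lam ≠ 0 := ne_of_gt hlam
  have hulr : (0:ℝ) < ulL - urL := by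
    have := lt_of_le_of_lt (le_max_left urL 0) hul; linarith
  have hrl : (0:ℝ) < urR - ulR := by
    have := lt_of_le_of_lt (le_max_left ulR 0) hur; linarith
  have hD : (0:ℝ) < urR - ulR + ulL - urL := by linarith
  obtain ⟨k, hkdef⟩ : ∃ k : ℝ, k = c / lam := ⟨_, rfl⟩
  have hk0 : (0:ℝ) < k := hkdef ▸ div_pos hc hlam
  obtain ⟨ph, hphdef⟩ : ∃ x : ℝ, x = phat ulL ulR urL urR := ⟨_, rfl⟩
  rw [← hphdef] at hlow ⊢
  have hphD : ph * (urR - ulR + ulL - urL) = ulL - urL := by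
    rw [hphdef, phat]; field_simp
  have hph0 : (0:ℝ) < ph := by
    rw [hphdef, phat]; exact div_pos hulr hD
  have hph1 : ph < 1 := by
    rw [hphdef, phat, div_lt_one hD]; linarith
  have hphq : ph < pstar := hlow
  have h1q : (0:ℝ) < 1 - pstar := by linarith
  -- the constant A and the function F
  obtain ⟨A, hAdef⟩ : ∃ x : ℝ, x = (Ur urL urR pstar - Ul ulL ulR pstar) / pstar := ⟨_, rfl⟩
  have hUdiff : Ur urL urR pstar - Ul ulL ulR pstar = (pstar - ph) * (urR - ulR + ulL - urL) := by
    simp only [Ur, Ul]; linear_combination hphD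
  have hAval : A = (pstar - ph) * (urR - ulR + ulL - urL) / pstar := by
    rw [hAdef, hUdiff]
  have hA0 : 0 < A := by
    rw [hAval]; exact div_pos (mul_pos (by linarith) hD) hq0
  obtain ⟨F, hFdef⟩ : ∃ F : ℝ → ℝ, F = fun p => A - k * (Real.log pstar - Real.log (1 - pstar)
      + Real.log (1 - p) - Real.log p + 1/p - 1/pstar) := ⟨_, rfl⟩
  -- key identity
  have key : ∀ p : ℝ, 0 < p → p < 1 →
      UR lam c ulL urL urR pstar p - Ul ulL ulR p = p * F p := by
    intro p hp0 hp1
    have hp1' : (0:ℝ) < 1 - p := by linarith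
    have hlog : Real.log (pstar / (1 - pstar) * ((1 - p) / p))
        = Real.log pstar - Real.log (1 - pstar) + Real.log (1 - p) - Real.log p := by
      rw [Real.log_mul (by positivity) (by positivity),
        Real.log_div (by positivity) (by positivity),
        Real.log_div (by positivity) (by positivity)]
      ring
    simp only [hFdef, hAdef, UR, Cplus, Ul, Ur]
    rw [hlog, hkdef]
    field_simp
    ring
  -- strict monotonicity of F
  have mono : ∀ p1 p2 : ℝ, 0 < p1 → p1 < p2 → p2 < 1 → F p1 < F p2 := by
    intro p1 p2 h1 h12 h2
    have l1 : Real.log (1 - p2) < Real.log (1 - p1) :=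
      Real.log_lt_log (by linarith) (by linarith)
    have l2 : Real.log p1 < Real.log p2 := Real.log_lt_log h1 h12
    have l3 : 1/p2 < 1/p1 := one_div_lt_one_div_of_lt h1 h12
    have hsum : (Real.log pstar - Real.log (1 - pstar) + Real.log (1 - p2) - Real.log p2
          + 1/p2 - 1/pstar)
        < (Real.log pstar - Real.log (1 - pstar) + Real.log (1 - p1) - Real.log p1
          + 1/p1 - 1/pstar) := by linarith
    have := mul_lt_mul_of_pos_left hsum hk0
    simp only [hFdef]
    linarith
  -- F pstar = A > 0
  have hFq : F pstar = A := by simp only [hFdef]; ring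
  -- a small point where F is negative
  obtain ⟨E, hEdef⟩ : ∃ x : ℝ, x = Real.log pstar - Real.log (1 - pstar) - 1/pstar := ⟨_, rfl⟩
  obtain ⟨M, hMdef⟩ : ∃ x : ℝ, x = max 2 (A/k + 2 - E) := ⟨_, rfl⟩
  have hM2 : (2:ℝ) ≤ M := hMdef ▸ le_max_left _ _
  have hM0 : (0:ℝ) < M := by linarith
  obtain ⟨a, hadef⟩ : ∃ x : ℝ, x = min (pstar/2) (1/M) := ⟨_, rfl⟩
  have ha0 : (0:ℝ) < a := hadef ▸ lt_min (by linarith) (by positivity)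
  have haq : a < pstar := lt_of_le_of_lt (hadef ▸ min_le_left _ _) (by linarith)
  have hahalf : a ≤ 1/2 := le_trans (hadef ▸ min_le_right _ _) (by
    rw [div_le_div_iff₀ hM0 (by norm_num)]; linarith)
  have haM : M ≤ 1/a := by
    have h1 : a ≤ 1/M := hadef ▸ min_le_right _ _
    rw [le_div_iff₀ ha0]
    calc M * a ≤ M * (1/M) := mul_le_mul_of_nonneg_left h1 hM0.le
      _ = 1 := by field_simp
  have hFa : F a < 0 := by
    have hla : Real.log a ≤ 0 := Real.log_nonpos ha0.le (by linarith)
    have hl1a : (-1:ℝ) ≤ Real.log (1 - a) := by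
      have h2 : Real.log (1/2 : ℝ) ≤ Real.log (1 - a) :=
        Real.log_le_log (by norm_num) (by linarith)
      have h3 : Real.log (1/2 : ℝ) = - Real.log 2 := by
        rw [one_div, Real.log_inv]
      have h4 : Real.log 2 ≤ 1 := by
        have := Real.log_le_sub_one_of_pos (by norm_num : (0:ℝ) < 2)
        linarith
      linarith
    have hMlow : A/k + 2 - E ≤ M := hMdef ▸ le_max_right _ _
    have hinner : A/k + 1 ≤ Real.log pstar - Real.log (1 - pstar)
        + Real.log (1 - a) - Real.log a + 1/a - 1/pstar := by
      have h5 : A/k + 2 - E ≤ 1/a := le_trans hMlow haM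
      rw [hEdef] at h5
      linarith
    have h6 : k * (A/k + 1) ≤ k * (Real.log pstar - Real.log (1 - pstar)
        + Real.log (1 - a) - Real.log a + 1/a - 1/pstar) :=
      mul_le_mul_of_nonneg_left hinner hk0.le
    have hkA : k * (A/k + 1) = A + k := by field_simp
    simp only [hFdef]
    linarith
  -- existence of the root via IVT
  have hcont : ContinuousOn F (Set.Icc a pstar) := by
    have hc2 : ContinuousOn Real.log (Set.Icc a pstar) :=
      ContinuousOn.log continuousOn_id (fun x hx => ne_of_gt (lt_of_lt_of_le ha0 hx.1))
    have hc1 : ContinuousOn (fun p : ℝ => Real.log (1 - p)) (Set.Icc a pstar) :=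
      ContinuousOn.log (continuousOn_const.sub continuousOn_id)
        (fun x hx => ne_of_gt (by have := hx.2; linarith))
    have hc3 : ContinuousOn (fun p : ℝ => 1/p) (Set.Icc a pstar) :=
      ContinuousOn.div continuousOn_const continuousOn_id
        (fun x hx => ne_of_gt (lt_of_lt_of_le ha0 hx.1))
    rw [hFdef]
    exact continuousOn_const.sub (continuousOn_const.mul
      (((((continuousOn_const.sub continuousOn_const).add hc1).sub hc2).add hc3).sub
        continuousOn_const))
  have hivt : Set.Ioo (F a) (F pstar) ⊆ F '' Set.Ioo a pstar :=
    intermediate_value_Ioo haq.le hcont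
  obtain ⟨phi, hphimem, hFphi⟩ := hivt ⟨hFa, by rw [hFq]; exact hA0⟩
  have hphi0 : 0 < phi := lt_trans ha0 hphimem.1
  have hphiq : phi < pstar := hphimem.2
  have hphi1 : phi < 1 := lt_trans hphiq hq1
  -- F ph > 0
  have hkle : k ≤ (1 - pstar) * (ulL - urL) := by
    have hml : (0:ℝ) < lam * (ulL - urL) := mul_pos hlam hulr
    have h1 : c / (lam * (ulL - urL)) ≤ 1 - pstar := by linarith
    have h2 : c ≤ (1 - pstar) * (lam * (ulL - urL)) := (div_le_iff₀ hml).mp h1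
    rw [hkdef, div_le_iff₀ hlam]
    nlinarith
  have hFph : 0 < F ph := by
    have hph1' : (0:ℝ) < 1 - ph := by linarith
    have hx1 : 1 < pstar * (1 - ph) / ((1 - pstar) * ph) := by
      rw [lt_div_iff₀ (by positivity)]
      linarith [mul_pos hq0 hph0]
    have hlogx : Real.log (pstar * (1 - ph) / ((1 - pstar) * ph))
        < pstar * (1 - ph) / ((1 - pstar) * ph) - 1 :=
      Real.log_lt_sub_one_of_pos (by positivity) (ne_of_gt hx1)
    have hlogsplit : Real.log (pstar * (1 - ph) / ((1 - pstar) * ph))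
        = Real.log pstar + Real.log (1 - ph) - (Real.log (1 - pstar) + Real.log ph) := by
      rw [Real.log_div (by positivity) (by positivity),
        Real.log_mul (by positivity) (by positivity),
        Real.log_mul (by positivity) (by positivity)]
    have hsum_eq : (pstar * (1 - ph) / ((1 - pstar) * ph) - 1) + 1/ph - 1/pstar
        = (pstar - ph) / ((1 - pstar) * ph * pstar) := by
      field_simp; ring
    have hfin : k * ((pstar - ph) / ((1 - pstar) * ph * pstar)) ≤ A := by
      have hkle' : k ≤ (1 - pstar) * (ph * (urR - ulR + ulL - urL)) := by
        rw [hphD]; exact hkle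
      rw [hAval, mul_div_assoc', div_le_div_iff₀ (by positivity) hq0]
      nlinarith [mul_nonneg (mul_nonneg (sub_nonneg.mpr hphq.le) hq0.le)
        (sub_nonneg.mpr hkle')]
    have h5 : k * (Real.log pstar - Real.log (1 - pstar) + Real.log (1 - ph) - Real.log ph
          + 1/ph - 1/pstar)
        < k * ((pstar - ph) / ((1 - pstar) * ph * pstar)) := by
      rw [← hsum_eq]
      apply mul_lt_mul_of_pos_left _ hk0
      linarith
    simp only [hFdef]
    linarith
  -- phi < ph
  have hphiph : phi < ph := by
    by_contra hcon
    push_neg at hcon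
    rcases eq_or_lt_of_le hcon with h | h
    · rw [h, hFphi] at hFph; linarith
    · have := mono ph phi hph0 h hphi1; rw [hFphi] at this; linarith
  refine ⟨phi, ⟨hphi0, hphiq⟩, ?_, hphiph, ?_, ?_, ?_⟩
  · have := key phi hphi0 hphi1
    rw [hFphi] at this
    linarith
  · intro p hp heq
    have hp1 : p < 1 := lt_trans hp.2 hq1
    have hkey := key p hp.1 hp1
    rw [heq] at hkey
    have hFp : F p = 0 := by
      have hz : p * F p = 0 := by linarith
      rcases mul_eq_zero.mp hz with h | h
      · exact absurd h (ne_of_gt hp.1)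
      · exact h
    rcases lt_trichotomy p phi with h | h | h
    · have := mono p phi hp.1 h hphi1; rw [hFp, hFphi] at this; linarith
    · exact h
    · have := mono phi p hphi0 h hp1; rw [hFp, hFphi] at this; linarith
  · intro p hp
    have hp1 : p < 1 := lt_trans hp.2 hphi1
    have hFp : F p < 0 := by
      have := mono p phi hp.1 hp.2 hphi1; rw [hFphi] at this; linarith
    have hkey := key p hp.1 hp1
    nlinarith [hp.1]
  · intro p hp
    have hp1 : p < 1 := lt_trans hp.2 hq1
    have hFp : 0 < F p := by
      have := mono phi p hphi0 hp.1 hp1; rw [hFphi] at this; linarith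
    have hkey := key p (lt_trans hphi0 hp.1) hp1
    nlinarith [lt_trans hphi0 hp.1]
end
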